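/- arXiv:2511.08285 — 4 statements merged into one kernel-verified Lean document; each statement's English description precedes it below -/
import Mathlib

section
/- For every λ ∈ [1/2, 1) there exists ε > 0 such that the matrix ρ_λ(ε) = λ Φ1(ε) + (1−λ)|01⟩⟨01| is a two-qubit density matrix with eigenvalues λ, 1−λ, 0, 0 (hence isospectral to ρ_λ = λ Φ1 + (1−λ)|01⟩⟨01|) that is not separable, and there exists no SEP map Λ satisfying Λ(ρ_λ) = ρ_λ(ε). -/
open Matrix Kronecker Polynomial
open scoped ComplexOrder

noncomputable section

/-- Index set for two qubits: ℂ²⊗ℂ² ≅ ℂ⁴ with basis |00⟩,|01⟩,|10⟩,|11⟩. -/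
abbrev Q2 : Type := Fin 2 × Fin 2
abbrev Mat2 : Type := Matrix (Fin 2) (Fin 2) ℂ
abbrev Mat4 : Type := Matrix Q2 Q2 ℂ
abbrev Vec4 : Type := Q2 → ℂ

/-- Computational basis vector |ij⟩. -/
def ket (i j : Fin 2) : Vec4 := fun p => if p = (i, j) then 1 else 0

/-- The rank-one matrix |ψ⟩⟨φ|. -/
def ketBra (ψ φ : Vec4) : Mat4 := fun p q => ψ p * star (φ q)

/-- The four Bell vectors |Φ1⟩,…,|Φ4⟩. -/
def bell : Fin 4 → Vec4 :=
  ![(Real.sqrt 2 : ℂ)⁻¹ • (ket 0 0 + ket 1 1),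
    (Real.sqrt 2 : ℂ)⁻¹ • (ket 0 0 - ket 1 1),
    (Real.sqrt 2 : ℂ)⁻¹ • (ket 1 0 + ket 0 1),
    (Real.sqrt 2 : ℂ)⁻¹ • (ket 1 0 - ket 0 1)]

/-- Bell projectors Φ_i = |Φ_i⟩⟨Φ_i|. -/
def bellProj (i : Fin 4) : Mat4 := ketBra (bell i) (bell i)

/-- A two-qubit density matrix: Hermitian positive semidefinite with trace one. -/
def IsDensity (ρ : Mat4) : Prop := ρ.PosSemidef ∧ ρ.trace = 1

/-- Unit vector in ℂ². -/
def IsUnitVec (u : Fin 2 → ℂ) : Prop := ∑ x, Complex.normSq (u x) = 1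

/-- Separable two-qubit density matrix: convex mixture of products of pure states. -/
def SepState (ρ : Mat4) : Prop :=
  ∃ (n : ℕ) (p : Fin n → ℝ) (u v : Fin n → Fin 2 → ℂ),
    (∀ i, 0 ≤ p i) ∧ (∑ i, p i = 1) ∧
    (∀ i, IsUnitVec (u i)) ∧ (∀ i, IsUnitVec (v i)) ∧
    ρ = ∑ i, (p i : ℂ) • (vecMulVec (u i) (star (u i)) ⊗ₖ vecMulVec (v i) (star (v i)))

/-- A SEP map: Kraus operators in product form, trace preserving. -/
def IsSEP (T : Mat4 → Mat4) : Prop :=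
  ∃ (k : ℕ) (A B : Fin k → Mat2),
    (∑ i, (A i ⊗ₖ B i)ᴴ * (A i ⊗ₖ B i) = 1) ∧
    ∀ X, T X = ∑ i, (A i ⊗ₖ B i) * X * (A i ⊗ₖ B i)ᴴ

/-- CPTP map in Kraus form. -/
def IsCPTP (T : Mat4 → Mat4) : Prop :=
  ∃ (k : ℕ) (K : Fin k → Mat4),
    (∑ i, (K i)ᴴ * K i = 1) ∧ ∀ X, T X = ∑ i, K i * X * (K i)ᴴ

/-- Non-entangling (NE) map: CPTP and maps separable states to separable states. -/
def IsNE (T : Mat4 → Mat4) : Prop :=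
  IsCPTP T ∧ ∀ ρ, SepState ρ → SepState (T ρ)

/-- The MEMS state ρ_λ = λ1 Φ1 + λ2 |01⟩⟨01| + λ3 Φ2 + λ4 |10⟩⟨10|. -/
def mems (l1 l2 l3 l4 : ℝ) : Mat4 :=
  (l1 : ℂ) • bellProj 0 + (l2 : ℂ) • ketBra (ket 0 1) (ket 0 1) +
  (l3 : ℂ) • bellProj 1 + (l4 : ℂ) • ketBra (ket 1 0) (ket 1 0)

/-- The Bell-diagonal state σ_λ = λ1 Φ1 + λ2 Φ2 + λ3 Φ3 + λ4 Φ4. -/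
def bdiag (l1 l2 l3 l4 : ℝ) : Mat4 :=
  (l1 : ℂ) • bellProj 0 + (l2 : ℂ) • bellProj 1 + (l3 : ℂ) • bellProj 2 + (l4 : ℂ) • bellProj 3

/-- The normalized vector |Φ1(ε)⟩ = (|Φ1⟩ + ε|10⟩)/√(1+ε²). -/
def phi1eps (ε : ℝ) : Vec4 :=
  (Real.sqrt (1 + ε ^ 2) : ℂ)⁻¹ • (bell 0 + (ε : ℂ) • ket 1 0)

/-- ρ_λ(ε) = λ Φ1(ε) + (1−λ)|01⟩⟨01|. -/
def rho2eps (lam ε : ℝ) : Mat4 :=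
  (lam : ℂ) • ketBra (phi1eps ε) (phi1eps ε) + ((1 - lam : ℝ) : ℂ) • ketBra (ket 0 1) (ket 0 1)

namespace NoSep

def cc : ℝ := Real.sqrt (8/17)
def dd : ℝ := Real.sqrt (1/17)
def qq : ℝ := Real.sqrt (1/2)

lemma cc_pos : 0 < cc := Real.sqrt_pos.2 (by norm_num)
lemma dd_pos : 0 < dd := Real.sqrt_pos.2 (by norm_num)
lemma qq_pos : 0 < qq := Real.sqrt_pos.2 (by norm_num)
lemma cc_sq : cc ^ 2 = 8/17 := Real.sq_sqrt (by norm_num)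
lemma dd_sq : dd ^ 2 = 1/17 := Real.sq_sqrt (by norm_num)
lemma qq_sq : qq ^ 2 = 1/2 := Real.sq_sqrt (by norm_num)
lemma ccC_sq : (cc:ℂ) ^ 2 = 8/17 := by rw [← Complex.ofReal_pow, cc_sq]; norm_num
lemma ddC_sq : (dd:ℂ) ^ 2 = 1/17 := by rw [← Complex.ofReal_pow, dd_sq]; norm_num
lemma qqC_sq : (qq:ℂ) ^ 2 = 1/2 := by rw [← Complex.ofReal_pow, qq_sq]; norm_num
lemma ccC_ne : (cc:ℂ) ≠ 0 := Complex.ofReal_ne_zero.2 cc_pos.ne'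
lemma ddC_ne : (dd:ℂ) ≠ 0 := Complex.ofReal_ne_zero.2 dd_pos.ne'
lemma qqC_ne : (qq:ℂ) ≠ 0 := Complex.ofReal_ne_zero.2 qq_pos.ne'
lemma sum1 : 2 * cc^2 + dd^2 = 1 := by rw [cc_sq, dd_sq]; norm_num
lemma sum1C : 2 * (cc:ℂ)^2 + (dd:ℂ)^2 = 1 := by rw [ccC_sq, ddC_sq]; norm_num

def psi : Vec4 := fun p => if p = (0,0) then (cc:ℂ) else if p = (1,0) then (dd:ℂ) else if p = (1,1) then (cc:ℂ) else 0
def phi : Vec4 := fun p => if p = (0,0) then (qq:ℂ) else if p = (1,1) then (qq:ℂ) else 0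

lemma phi1eps_zero : phi1eps 0 = phi := by
  funext p
  obtain ⟨i, j⟩ := p
  have h1 : Real.sqrt (1 + (0:ℝ)^2) = 1 := by norm_num
  have h2 : ((Real.sqrt 2 : ℝ) : ℂ)⁻¹ = (qq : ℂ) := by
    rw [show qq = (Real.sqrt 2)⁻¹ by rw [qq, one_div, Real.sqrt_inv]]
    push_cast
    ring
  fin_cases i <;> fin_cases j <;>
    simp [phi1eps, bell, phi, ket, h1, h2, Matrix.cons_val_zero] <;> norm_num

lemma phi1eps_quarter : phi1eps (1/4) = psi := by
  have hA : Real.sqrt 16 / Real.sqrt 17 * (Real.sqrt 2)⁻¹ = cc := by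
    rw [cc, Real.sqrt_div (by norm_num : (0:ℝ) ≤ 8)]
    have h17 : Real.sqrt 17 ≠ 0 := by positivity
    have h2 : Real.sqrt 2 ≠ 0 := by positivity
    field_simp
    rw [← Real.sqrt_mul (by norm_num : (0:ℝ) ≤ 2), show (2:ℝ)*8 = 16 by norm_num]
  have hB : Real.sqrt 16 / Real.sqrt 17 * (1/4) = dd := by
    have h16 : Real.sqrt 16 = 4 := by
      rw [show (16:ℝ) = 4^2 by norm_num, Real.sqrt_sq]; norm_num
    rw [dd, h16, Real.sqrt_div (by norm_num : (0:ℝ) ≤ 1), Real.sqrt_one]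
    ring
  have hAC : ((Real.sqrt 16 :ℝ):ℂ) / ((Real.sqrt 17:ℝ):ℂ) * (((Real.sqrt 2:ℝ):ℂ))⁻¹ = (cc:ℂ) := by
    rw [← hA]; push_cast; ring
  have hBC : ((Real.sqrt 16 :ℝ):ℂ) / ((Real.sqrt 17:ℝ):ℂ) * (1/4 : ℂ) = (dd:ℂ) := by
    rw [← hB]; push_cast; ring
  have h16C : ((Real.sqrt 16 :ℝ):ℂ) = 4 := by
    rw [show (16:ℝ) = 4^2 by norm_num, Real.sqrt_sq (by norm_num)]; norm_num
  have hAC' : (4:ℂ) / ((Real.sqrt 17:ℝ):ℂ) * (((Real.sqrt 2:ℝ):ℂ))⁻¹ = (cc:ℂ) := by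
    rw [← hAC, h16C]
  have hBC' : (((Real.sqrt 17:ℝ):ℂ))⁻¹ = (dd:ℂ) := by
    rw [← hBC, h16C]; ring
  funext p
  obtain ⟨i, j⟩ := p
  have n1 : ((0:Q2)) ≠ ((1,0):Q2) := by decide
  have n2 : ((1:Q2)) ≠ ((1,0):Q2) := by decide
  have n3 : (((0,1)):Q2) ≠ ((1,0):Q2) := by decide
  fin_cases i <;> fin_cases j <;>
    simp [phi1eps, bell, psi, ket, n1, n2, n3, Matrix.cons_val_zero] <;>
    norm_num <;> first | exact hAC | exact hBC | exact hAC' | exact hBC'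


def e01v : Vec4 := ket 0 1
def v1 : Vec4 := fun p => if p = (0,0) then 1 else if p = (1,1) then (-1) else 0
def v2 : Vec4 := fun p => if p = (0,0) then (dd:ℂ) else if p = (1,0) then (-(2*cc)) else if p = (1,1) then (dd:ℂ) else 0

lemma ketBra_mulVec (x y v : Vec4) : ketBra x y *ᵥ v = (star y ⬝ᵥ v) • x := by
  funext p
  simp only [ketBra, mulVec, dotProduct, Pi.smul_apply, smul_eq_mul, Pi.star_apply]
  rw [Finset.sum_mul]
  exact Finset.sum_congr rfl fun q _ => by ring

lemma star_dot (v z : Vec4) : star v ⬝ᵥ z = star ((star z) ⬝ᵥ v) := by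
  simp only [dotProduct, Pi.star_apply, star_sum, star_mul', star_star]
  exact Finset.sum_congr rfl fun q _ => mul_comm _ _

lemma conj_ketBra (M : Mat4) (x y : Vec4) : M * ketBra x y * Mᴴ = ketBra (M *ᵥ x) (M *ᵥ y) := by
  ext p q
  simp only [Matrix.mul_apply, ketBra, conjTranspose_apply, mulVec, dotProduct, star_sum,
    star_mul', star_star, Finset.mul_sum, Finset.sum_mul]
  refine Finset.sum_congr rfl fun s _ => Finset.sum_congr rfl fun r _ => by ring

lemma dot_psi_psi : star psi ⬝ᵥ psi = 1 := by
  simp [dotProduct, Fintype.sum_prod_type, Fin.sum_univ_two, psi, Complex.star_def, Complex.conj_ofReal]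
  linear_combination sum1C

lemma dot_e01_psi : star e01v ⬝ᵥ psi = 0 := by
  simp [dotProduct, Fintype.sum_prod_type, Fin.sum_univ_two, psi, e01v, ket, Complex.star_def]

lemma dot_psi_e01 : star psi ⬝ᵥ e01v = 0 := by
  simp [dotProduct, Fintype.sum_prod_type, Fin.sum_univ_two, psi, e01v, ket, Complex.star_def]

lemma dot_e01_e01 : star e01v ⬝ᵥ e01v = 1 := by
  simp [dotProduct, Fintype.sum_prod_type, Fin.sum_univ_two, e01v, ket, Complex.star_def]

lemma dot_psi_v1 : star psi ⬝ᵥ v1 = 0 := by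
  simp [dotProduct, Fintype.sum_prod_type, Fin.sum_univ_two, psi, v1, Complex.star_def, Complex.conj_ofReal]

lemma dot_e01_v1 : star e01v ⬝ᵥ v1 = 0 := by
  simp [dotProduct, Fintype.sum_prod_type, Fin.sum_univ_two, e01v, ket, v1, Complex.star_def]

lemma dot_psi_v2 : star psi ⬝ᵥ v2 = 0 := by
  simp [dotProduct, Fintype.sum_prod_type, Fin.sum_univ_two, psi, v2, Complex.star_def, Complex.conj_ofReal]
  ring

lemma dot_e01_v2 : star e01v ⬝ᵥ v2 = 0 := by
  simp [dotProduct, Fintype.sum_prod_type, Fin.sum_univ_two, e01v, ket, v2, Complex.star_def]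


lemma rho_eps (lam : ℝ) : rho2eps lam (1/4) =
    (lam:ℂ) • ketBra psi psi + ((1-lam:ℝ):ℂ) • ketBra e01v e01v := by
  rw [rho2eps, phi1eps_quarter]; rfl

lemma rho_zero (lam : ℝ) : rho2eps lam 0 =
    (lam:ℂ) • ketBra phi phi + ((1-lam:ℝ):ℂ) • ketBra e01v e01v := by
  rw [rho2eps, phi1eps_zero]; rfl

lemma M_psi (lam : ℝ) : rho2eps lam (1/4) *ᵥ psi = (lam:ℂ) • psi := by
  rw [rho_eps, add_mulVec, smul_mulVec, smul_mulVec, ketBra_mulVec, ketBra_mulVec,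
    dot_psi_psi, dot_e01_psi]
  simp

lemma M_e01 (lam : ℝ) : rho2eps lam (1/4) *ᵥ e01v = ((1-lam:ℝ):ℂ) • e01v := by
  rw [rho_eps, add_mulVec, smul_mulVec, smul_mulVec, ketBra_mulVec, ketBra_mulVec,
    dot_psi_e01, dot_e01_e01]
  simp

lemma M_v1 (lam : ℝ) : rho2eps lam (1/4) *ᵥ v1 = 0 := by
  rw [rho_eps, add_mulVec, smul_mulVec, smul_mulVec, ketBra_mulVec, ketBra_mulVec,
    dot_psi_v1, dot_e01_v1]
  simp

lemma M_v2 (lam : ℝ) : rho2eps lam (1/4) *ᵥ v2 = 0 := by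
  rw [rho_eps, add_mulVec, smul_mulVec, smul_mulVec, ketBra_mulVec, ketBra_mulVec,
    dot_psi_v2, dot_e01_v2]
  simp

def Umat : Mat4 := fun p q =>
  if q = (0,0) then psi p else if q = (0,1) then e01v p else if q = (1,0) then v1 p else v2 p

def gfun (lam : ℝ) : Q2 → ℂ :=
  fun q => if q = (0,0) then (lam:ℂ) else if q = (0,1) then ((1-lam:ℝ):ℂ) else 0

lemma col_eq (M : Mat4) (v : Vec4) (p : Q2) : ∑ r, M p r * v r = (M *ᵥ v) p := rfl

lemma hMU (lam : ℝ) : rho2eps lam (1/4) * Umat = Umat * diagonal (gfun lam) := by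
  ext p q
  rw [Matrix.mul_diagonal, Matrix.mul_apply']
  fin_cases q <;> beta_reduce <;> simp only [Fin.mk_zero, Fin.mk_one]
  · have hcol : (fun r => Umat r ((0:Fin 2),(0:Fin 2))) = psi := funext fun r => by
      simp [Umat, Prod.ext_iff]
    rw [hcol, show rho2eps lam (1/4) p ⬝ᵥ psi = (rho2eps lam (1/4) *ᵥ psi) p from rfl, M_psi lam]
    simp [Umat, gfun, Prod.ext_iff, mul_comm]
  · have hcol : (fun r => Umat r ((0:Fin 2),(1:Fin 2))) = e01v := funext fun r => by
      simp [Umat, Prod.ext_iff]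
    rw [hcol, show rho2eps lam (1/4) p ⬝ᵥ e01v = (rho2eps lam (1/4) *ᵥ e01v) p from rfl, M_e01 lam]
    simp [Umat, gfun, Prod.ext_iff, mul_comm]
  · have hcol : (fun r => Umat r ((1:Fin 2),(0:Fin 2))) = v1 := funext fun r => by
      simp [Umat, Prod.ext_iff]
    rw [hcol, show rho2eps lam (1/4) p ⬝ᵥ v1 = (rho2eps lam (1/4) *ᵥ v1) p from rfl, M_v1 lam]
    simp [Umat, gfun, Prod.ext_iff]
  · have hcol : (fun r => Umat r ((1:Fin 2),(1:Fin 2))) = v2 := funext fun r => by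
      simp [Umat, Prod.ext_iff]
    rw [hcol, show rho2eps lam (1/4) p ⬝ᵥ v2 = (rho2eps lam (1/4) *ᵥ v2) p from rfl, M_v2 lam]
    simp [Umat, gfun, Prod.ext_iff]

def eQ : Fin 4 ≃ Q2 :=
  ⟨![(0,0),(0,1),(1,0),(1,1)],
   fun p => if p = (0,0) then 0 else if p = (0,1) then 1 else if p = (1,0) then 2 else 3,
   by decide, by decide⟩

lemma det_Umat : Umat.det = -2 := by
  rw [← Matrix.det_submatrix_equiv_self eQ Umat]
  have hsub : Umat.submatrix eQ eQ = !![(cc:ℂ), 0, 1, (dd:ℂ); 0, 1, 0, 0; (dd:ℂ), 0, 0, -(2*(cc:ℂ)); (cc:ℂ), 0, -1, (dd:ℂ)] := by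
    ext i j
    fin_cases i <;> fin_cases j <;> simp [Umat, eQ, psi, e01v, ket, v1, v2]
  rw [hsub]
  simp [Matrix.det_succ_row_zero, Fin.sum_univ_succ, Fin.succAbove]
  linear_combination (-4 : ℂ) * ccC_sq + (-2 : ℂ) * ddC_sq


lemma charmatrix_diag (g : Q2 → ℂ) :
    charmatrix (diagonal g) = diagonal (fun q => (X : ℂ[X]) - C (g q)) := by
  ext p q
  by_cases h : p = q
  · subst h; simp
  · simp [Matrix.charmatrix_apply_ne _ _ _ h, Matrix.diagonal_apply_ne _ h]

lemma charpoly_rho (lam : ℝ) : (rho2eps lam (1/4)).charpoly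
    = (X - C (lam:ℂ)) * (X - C ((1-lam:ℝ):ℂ)) * X * X := by
  have hcomm : charmatrix (rho2eps lam (1/4)) * Umat.map C
      = Umat.map C * charmatrix (diagonal (gfun lam)) := by
    rw [charmatrix, charmatrix, sub_mul, mul_sub]
    congr 1
    · exact (Matrix.scalar_commute (X : ℂ[X]) (fun r' => Commute.all _ _) (Umat.map C)).eq
    · rw [RingHom.mapMatrix_apply, RingHom.mapMatrix_apply, ← Matrix.map_mul, ← Matrix.map_mul,
        hMU]
  have hdet := congrArg Matrix.det hcomm
  rw [Matrix.det_mul, Matrix.det_mul] at hdet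
  have hU : (Umat.map (C : ℂ →+* ℂ[X])).det = C (-2) := by
    rw [← RingHom.mapMatrix_apply, ← RingHom.map_det, det_Umat]
  rw [hU] at hdet
  have hC2 : (C (-2 : ℂ) : ℂ[X]) ≠ 0 := by
    simp
  have hmain : (rho2eps lam (1/4)).charpoly = (diagonal (gfun lam)).charpoly := by
    apply mul_right_cancel₀ hC2
    show (charmatrix _).det * _ = (charmatrix _).det * _
    rw [hdet]; ring
  rw [hmain]
  show (charmatrix _).det = _
  rw [charmatrix_diag, Matrix.det_diagonal, Fintype.prod_prod_type]
  simp [Fin.prod_univ_two, gfun, Prod.ext_iff]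
  ring


lemma ketBra_herm (v : Vec4) : (ketBra v v)ᴴ = ketBra v v := by
  ext p q
  simp [Matrix.conjTranspose_apply, ketBra, mul_comm]

lemma trace_ketBra (v : Vec4) : (ketBra v v).trace = star v ⬝ᵥ v := by
  simp [Matrix.trace, Matrix.diag, ketBra, dotProduct, mul_comm]

lemma density (lam : ℝ) (hl : 0 ≤ lam) (hu : lam ≤ 1) : IsDensity (rho2eps lam (1/4)) := by
  constructor
  · refine Matrix.posSemidef_iff_dotProduct_mulVec.mpr ⟨?_, ?_⟩
    · show _ᴴ = _
      rw [rho_eps, conjTranspose_add, conjTranspose_smul, conjTranspose_smul,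
        ketBra_herm, ketBra_herm]
      simp [Complex.star_def, Complex.conj_ofReal]
    · intro x
      rw [rho_eps, add_mulVec, smul_mulVec, smul_mulVec, ketBra_mulVec, ketBra_mulVec,
        dotProduct_add, dotProduct_smul, dotProduct_smul, dotProduct_smul, dotProduct_smul]
      rw [star_dot x psi, star_dot x e01v]
      set s := star psi ⬝ᵥ x
      set t := star e01v ⬝ᵥ x
      have hs : s * star s = (Complex.normSq s : ℂ) := Complex.mul_conj s
      have ht : t * star t = (Complex.normSq t : ℂ) := Complex.mul_conj t
      simp only [smul_eq_mul, ← mul_assoc]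
      rw [mul_assoc ((lam:ℝ):ℂ), hs, mul_assoc, ht]
      rw [show ((lam:ℝ):ℂ) * (Complex.normSq s : ℂ) + ((1-lam:ℝ):ℂ) * (Complex.normSq t : ℂ)
          = ((lam * Complex.normSq s + (1-lam) * Complex.normSq t : ℝ) : ℂ) by push_cast; ring]
      rw [Complex.zero_le_real]
      have := Complex.normSq_nonneg s
      have := Complex.normSq_nonneg t
      nlinarith
  · rw [rho_eps, Matrix.trace_add, Matrix.trace_smul, Matrix.trace_smul, trace_ketBra,
      trace_ketBra, dot_psi_psi, dot_e01_e01]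
    simp


def wv : Vec4 := fun p => if p = (0,1) then 1 else if p = (1,0) then (-8) else 0

def F (ρ : Mat4) : ℂ := ∑ p : Q2, ∑ q : Q2, star (wv p) * wv q * ρ (q.1, p.2) (p.1, q.2)

lemma Fsep {ρ : Mat4} (hs : SepState ρ) : ∃ r : ℝ, 0 ≤ r ∧ F ρ = (r : ℂ) := by
  obtain ⟨n, p, u, v, hp, -, -, -, hρ⟩ := hs
  set s : Fin n → ℂ := fun i => ∑ q : Q2, wv q * u i q.1 * star (v i q.2) with hsdef
  have key : F ρ = ∑ i, (p i : ℂ) * (star (s i) * s i) := by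
    subst hρ
    unfold F
    simp only [Matrix.sum_apply, Matrix.smul_apply, Matrix.kroneckerMap_apply,
      Matrix.vecMulVec_apply, smul_eq_mul, Finset.mul_sum, Pi.star_apply]
    have hswap : ∀ (f : Q2 → Q2 → Fin n → ℂ),
        (∑ x : Q2, ∑ y : Q2, ∑ i, f x y i) = ∑ i, ∑ x : Q2, ∑ y : Q2, f x y i := by
      intro f
      rw [show (∑ x : Q2, ∑ y : Q2, ∑ i, f x y i) = ∑ x : Q2, ∑ i, ∑ y : Q2, f x y i from
        Finset.sum_congr rfl fun x _ => Finset.sum_comm]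
      exact Finset.sum_comm
    rw [hswap]
    refine Finset.sum_congr rfl fun i _ => ?_
    have hstar : star (s i) = ∑ q : Q2, star (wv q) * star (u i q.1) * v i q.2 := by
      rw [hsdef]
      simp only [star_sum, star_mul', star_star]
      try exact Finset.sum_congr rfl fun q _ => by ring
    rw [hstar]
    simp only [hsdef]
    rw [Finset.sum_mul_sum, Finset.mul_sum]
    refine Finset.sum_congr rfl fun a _ => ?_
    rw [Finset.mul_sum]
    refine Finset.sum_congr rfl fun b _ => by ring
  refine ⟨∑ i, p i * Complex.normSq (s i), Finset.sum_nonneg fun i _ =>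
    mul_nonneg (hp i) (Complex.normSq_nonneg _), ?_⟩
  rw [key]
  push_cast
  refine Finset.sum_congr rfl fun i _ => ?_
  rw [show star (s i) * s i = ((Complex.normSq (s i) : ℝ) : ℂ) by
    rw [mul_comm]; exact Complex.mul_conj (s i)]

lemma Fval (lam : ℝ) : F (rho2eps lam (1/4)) = ((1 - lam - (64/17)*lam : ℝ) : ℂ) := by
  rw [rho_eps]
  unfold F wv
  simp [Matrix.add_apply, Matrix.smul_apply, ketBra, psi, e01v, ket, Fintype.sum_prod_type,
    Fin.sum_univ_two, Complex.star_def, Complex.conj_ofReal, Prod.ext_iff, map_ofNat]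
  push_cast
  linear_combination (64*(lam:ℂ))*ddC_sq - (16*(lam:ℂ))*ccC_sq

lemma not_sep (lam : ℝ) (h1 : 1/2 ≤ lam) : ¬ SepState (rho2eps lam (1/4)) := by
  intro hs
  obtain ⟨r, hr0, hr⟩ := Fsep hs
  rw [Fval] at hr
  have heq : (1 - lam - (64/17)*lam : ℝ) = r := by exact_mod_cast hr
  linarith


lemma kron_mulVec_e01 (A B : Mat2) : (A ⊗ₖ B) *ᵥ e01v = fun p => A p.1 0 * B p.2 1 := by
  funext p
  simp [mulVec, dotProduct, Fintype.sum_prod_type, Fin.sum_univ_two,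
    Matrix.kroneckerMap_apply, e01v, ket, Prod.ext_iff]

lemma kron_mulVec_phi (A B : Mat2) :
    (A ⊗ₖ B) *ᵥ phi = fun p => (qq:ℂ) * (A p.1 0 * B p.2 0 + A p.1 1 * B p.2 1) := by
  funext p
  simp [mulVec, dotProduct, Fintype.sum_prod_type, Fin.sum_univ_two,
    Matrix.kroneckerMap_apply, phi, Prod.ext_iff]
  ring

lemma key_det (a00 a01 a10 a11 b00 b01 b10 b11 : ℂ)
    (H2 : (cc:ℂ) * (a10*b00 + a11*b01) = (dd:ℂ) * (a00*b00 + a01*b01))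
    (H3 : a00 * b01 = a10 * b11)
    (H4 : (cc:ℂ) * (a10 * b01) = (dd:ℂ) * (a00 * b01)) :
    (a00*b00 + a01*b01) * (a10*b10 + a11*b11) = (a00*b10 + a01*b11) * (a10*b00 + a11*b01) := by
  suffices h : (a00*a11 - a01*a10) * (b00*b11 - b01*b10) = 0 by linear_combination h
  by_cases hb01 : b01 = 0
  · by_cases hb11 : b11 = 0
    · rw [hb01, hb11]; ring
    · have ha10 : a10 = 0 := by
        have h3 := H3
        rw [hb01, mul_zero] at h3
        exact (mul_eq_zero.1 h3.symm).resolve_right hb11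
      have hd0 : (dd:ℂ) * (a00*b00) = 0 := by
        have h2 := H2
        rw [hb01, ha10] at h2
        linear_combination -h2
      have h00 : a00 * b00 = 0 := (mul_eq_zero.1 hd0).resolve_left ddC_ne
      rcases mul_eq_zero.1 h00 with h | h
      · rw [h, ha10]; ring
      · rw [h, hb01]; ring
  · by_cases ha00 : a00 = 0
    · have ha10 : a10 = 0 := by
        have h4 := H4
        rw [ha00, zero_mul, mul_zero] at h4
        have := (mul_eq_zero.1 h4).resolve_left ccC_ne
        exact (mul_eq_zero.1 this).resolve_right hb01
      rw [ha00, ha10]; ring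
    · have h4' : (cc:ℂ) * a10 = (dd:ℂ) * a00 := by
        apply mul_right_cancel₀ hb01
        linear_combination H4
      have h2' : (cc:ℂ) * a11 = (dd:ℂ) * a01 := by
        apply mul_right_cancel₀ hb01
        linear_combination H2 - b00 * h4'
      have hdetA : a00 * a11 - a01 * a10 = 0 := by
        have hc : (cc:ℂ) * (a00 * a11 - a01 * a10) = 0 := by
          linear_combination a00 * h2' - a01 * h4'
        exact (mul_eq_zero.1 hc).resolve_left ccC_ne
      rw [hdetA, zero_mul]

lemma per_term {z : Vec4} (hR1 : z (0,0) = z (1,1))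
    (hR2 : (cc:ℂ) * z (1,0) = (dd:ℂ) * z (0,0))
    (hR3 : z (0,0) * z (1,1) = z (0,1) * z (1,0)) :
    (dd:ℂ) * (z (0,0) * star (z (0,1))) = (cc:ℂ) * (z (0,0) * star (z (0,0))) := by
  simp only [Complex.star_def]
  by_cases h0 : z (0,0) = 0
  · rw [h0]; ring
  · have h1 : (cc:ℂ) * (z (0,0))^2 = (dd:ℂ) * (z (0,0) * z (0,1)) := by
      linear_combination (cc:ℂ) * z (0,0) * hR1 + (cc:ℂ) * hR3 + z (0,1) * hR2
    have h2 : (cc:ℂ) * z (0,0) = (dd:ℂ) * z (0,1) := by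
      apply mul_left_cancel₀ h0
      linear_combination h1
    have h3 := congrArg (starRingEnd ℂ) h2
    simp only [_root_.map_mul, Complex.conj_ofReal] at h3
    linear_combination (-(z (0,0))) * h3

lemma dot_v1' (z : Vec4) : star z ⬝ᵥ v1 = star (z (0,0)) - star (z (1,1)) := by
  simp [dotProduct, Fintype.sum_prod_type, Fin.sum_univ_two, v1, Prod.ext_iff]
  ring

lemma dot_v2' (z : Vec4) : star z ⬝ᵥ v2
    = (dd:ℂ) * star (z (0,0)) - 2*(cc:ℂ) * star (z (1,0)) + (dd:ℂ) * star (z (1,1)) := by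
  simp [dotProduct, Fintype.sum_prod_type, Fin.sum_univ_two, v2, Prod.ext_iff]
  ring

lemma relations {z : Vec4} (e1 : star z ⬝ᵥ v1 = 0) (e2 : star z ⬝ᵥ v2 = 0) :
    z (0,0) = z (1,1) ∧ (cc:ℂ) * z (1,0) = (dd:ℂ) * z (0,0) := by
  rw [dot_v1'] at e1
  rw [dot_v2'] at e2
  have c1 := congrArg (starRingEnd ℂ) e1
  have c2 := congrArg (starRingEnd ℂ) e2
  simp only [map_sub, map_add, _root_.map_mul, map_zero, map_ofNat, Complex.star_def,
    Complex.conj_conj, Complex.conj_ofReal] at c1 c2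
  refine ⟨by linear_combination c1, by linear_combination (-(1/2 : ℂ)) * c2 - ((dd:ℂ)/2) * c1⟩

lemma eps_entry_01 (lam : ℝ) : rho2eps lam (1/4) (0,0) (0,1) = 0 := by
  rw [rho_eps]
  simp [ketBra, psi, e01v, ket, Prod.ext_iff, Complex.star_def]

lemma eps_entry_00 (lam : ℝ) : rho2eps lam (1/4) (0,0) (0,0) = (lam:ℂ) * ((cc:ℂ) * (cc:ℂ)) := by
  rw [rho_eps]
  simp [ketBra, psi, e01v, ket, Prod.ext_iff, Complex.star_def, Complex.conj_ofReal]


lemma sum_mulVec' {k : ℕ} (M : Fin k → Mat4) (v : Vec4) :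
    (∑ i, M i) *ᵥ v = ∑ i, M i *ᵥ v := by
  funext p
  simp only [mulVec, dotProduct, Matrix.sum_apply, Finset.sum_apply, Finset.sum_mul]
  rw [Finset.sum_comm]

lemma dot_sum' {k : ℕ} (f : Fin k → Vec4) (v : Vec4) :
    v ⬝ᵥ (∑ i, f i) = ∑ i, v ⬝ᵥ f i := by
  simp only [dotProduct, Finset.sum_apply, Finset.mul_sum]
  rw [Finset.sum_comm]

lemma no_sep_map (lam : ℝ) (h1 : 1/2 ≤ lam) (h2 : lam < 1) :
    ¬ ∃ T : Mat4 → Mat4, IsSEP T ∧ T (rho2eps lam 0) = rho2eps lam (1/4) := by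
  rintro ⟨T, ⟨k, A, B, -, hTdef⟩, hTρ⟩
  have hl0 : (0:ℝ) < lam := by linarith
  have ha0 : (0:ℝ) < 1 - lam := by linarith
  set u : Fin k → Vec4 := fun i => (A i ⊗ₖ B i) *ᵥ phi with hu
  set w : Fin k → Vec4 := fun i => (A i ⊗ₖ B i) *ᵥ e01v with hw
  have hTv : ∑ i, ((lam:ℂ) • ketBra (u i) (u i) + ((1-lam:ℝ):ℂ) • ketBra (w i) (w i))
      = rho2eps lam (1/4) := by
    rw [← hTρ, hTdef, rho_zero]
    refine Finset.sum_congr rfl fun i _ => ?_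
    rw [Matrix.mul_add, Matrix.add_mul, Matrix.mul_smul, Matrix.smul_mul, Matrix.mul_smul,
      Matrix.smul_mul, conj_ketBra, conj_ketBra]
  have horth : ∀ v : Vec4, rho2eps lam (1/4) *ᵥ v = 0 →
      ∀ i, star (u i) ⬝ᵥ v = 0 ∧ star (w i) ⬝ᵥ v = 0 := by
    intro v hv0
    have h0 : star v ⬝ᵥ ((∑ i, ((lam:ℂ) • ketBra (u i) (u i)
        + ((1-lam:ℝ):ℂ) • ketBra (w i) (w i))) *ᵥ v) = 0 := by
      rw [hTv, hv0, dotProduct_zero]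
    have hexp : star v ⬝ᵥ ((∑ i, ((lam:ℂ) • ketBra (u i) (u i)
        + ((1-lam:ℝ):ℂ) • ketBra (w i) (w i))) *ᵥ v)
        = ((∑ i, (lam * Complex.normSq (star (u i) ⬝ᵥ v)
            + (1-lam) * Complex.normSq (star (w i) ⬝ᵥ v)) : ℝ) : ℂ) := by
      rw [sum_mulVec', dot_sum']
      push_cast
      refine Finset.sum_congr rfl fun i _ => ?_
      rw [add_mulVec, smul_mulVec, smul_mulVec, ketBra_mulVec, ketBra_mulVec,
        dotProduct_add, dotProduct_smul, dotProduct_smul, dotProduct_smul, dotProduct_smul,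
        star_dot v (u i), star_dot v (w i)]
      simp only [smul_eq_mul, Complex.star_def, Complex.mul_conj]
      try push_cast
      try ring
    rw [hexp] at h0
    have hreal := Complex.ofReal_eq_zero.1 h0
    intro i
    have hterm : lam * Complex.normSq (star (u i) ⬝ᵥ v)
        + (1-lam) * Complex.normSq (star (w i) ⬝ᵥ v) = 0 :=
      (Finset.sum_eq_zero_iff_of_nonneg (fun j _ =>
        add_nonneg (mul_nonneg hl0.le (Complex.normSq_nonneg _))
          (mul_nonneg ha0.le (Complex.normSq_nonneg _)))).1 hreal i (Finset.mem_univ i)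
    have hn1 := Complex.normSq_nonneg (star (u i) ⬝ᵥ v)
    have hn2 := Complex.normSq_nonneg (star (w i) ⬝ᵥ v)
    constructor
    · refine Complex.normSq_eq_zero.1 ?_
      nlinarith
    · refine Complex.normSq_eq_zero.1 ?_
      nlinarith
  have hpt : ∀ i, (dd:ℂ) * (u i (0,0) * star (u i (0,1))) = (cc:ℂ) * (u i (0,0) * star (u i (0,0)))
      ∧ (dd:ℂ) * (w i (0,0) * star (w i (0,1))) = (cc:ℂ) * (w i (0,0) * star (w i (0,0))) := by
    intro i
    obtain ⟨hu1, hw1⟩ := horth v1 (M_v1 lam) i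
    obtain ⟨hu2, hw2⟩ := horth v2 (M_v2 lam) i
    obtain ⟨hR1u, hR2u⟩ := relations hu1 hu2
    obtain ⟨hR1w, hR2w⟩ := relations hw1 hw2
    have hwp : ∀ p : Q2, w i p = A i p.1 0 * B i p.2 1 := fun p => by
      simp only [hw, kron_mulVec_e01]
    have hcomp : ∀ p : Q2, u i p = (qq:ℂ) * (A i p.1 0 * B i p.2 0 + A i p.1 1 * B i p.2 1) := by
      intro p; simp only [hu, kron_mulVec_phi]
    have hR3w : w i (0,0) * w i (1,1) = w i (0,1) * w i (1,0) := by
      rw [hwp (0,0), hwp (1,1), hwp (0,1), hwp (1,0)]; ring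
    have H2 : (cc:ℂ) * (A i 1 0 * B i 0 0 + A i 1 1 * B i 0 1)
        = (dd:ℂ) * (A i 0 0 * B i 0 0 + A i 0 1 * B i 0 1) := by
      have h := hR2u
      rw [hcomp (1,0), hcomp (0,0)] at h
      apply mul_left_cancel₀ qqC_ne
      linear_combination h
    have H3 : A i 0 0 * B i 0 1 = A i 1 0 * B i 1 1 := by
      have h := hR1w
      rw [hwp (0,0), hwp (1,1)] at h
      exact h
    have H4 : (cc:ℂ) * (A i 1 0 * B i 0 1) = (dd:ℂ) * (A i 0 0 * B i 0 1) := by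
      have h := hR2w
      rw [hwp (1,0), hwp (0,0)] at h
      exact h
    have hR3u : u i (0,0) * u i (1,1) = u i (0,1) * u i (1,0) := by
      rw [hcomp (0,0), hcomp (1,1), hcomp (0,1), hcomp (1,0)]
      have hk := key_det (A i 0 0) (A i 0 1) (A i 1 0) (A i 1 1)
        (B i 0 0) (B i 0 1) (B i 1 0) (B i 1 1) H2 H3 H4
      linear_combination (qq:ℂ)^2 * hk
    exact ⟨per_term hR1u hR2u hR3u, per_term hR1w hR2w hR3w⟩
  have hfin : (dd:ℂ) * rho2eps lam (1/4) (0,0) (0,1)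
      = (cc:ℂ) * rho2eps lam (1/4) (0,0) (0,0) := by
    rw [← hTv]
    simp only [Matrix.sum_apply, Matrix.add_apply, Matrix.smul_apply, ketBra, smul_eq_mul]
    rw [Finset.mul_sum, Finset.mul_sum]
    refine Finset.sum_congr rfl fun i _ => ?_
    linear_combination (lam:ℂ) * (hpt i).1 + ((1-lam:ℝ):ℂ) * (hpt i).2
  rw [eps_entry_01, eps_entry_00] at hfin
  have hlam0 : (lam:ℂ) = 0 := by
    have hc : (cc:ℂ) * ((lam:ℂ) * ((cc:ℂ) * (cc:ℂ))) = 0 := by linear_combination -hfin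
    rcases mul_eq_zero.1 hc with h | h
    · exact absurd h ccC_ne
    rcases mul_eq_zero.1 h with h' | h'
    · exact h'
    · exact absurd h' (mul_ne_zero ccC_ne ccC_ne)
  have : lam = 0 := by exact_mod_cast hlam0
  linarith

end NoSep

theorem no_SEP_rank2 (lam : ℝ) (h1 : 1 / 2 ≤ lam) (h2 : lam < 1) :
    ∃ ε : ℝ, 0 < ε ∧
      IsDensity (rho2eps lam ε) ∧
      (rho2eps lam ε).charpoly =
        (X - C (lam : ℂ)) * (X - C ((1 - lam : ℝ) : ℂ)) * X * X ∧
      ¬ SepState (rho2eps lam ε) ∧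
      ¬ ∃ T : Mat4 → Mat4, IsSEP T ∧ T (rho2eps lam 0) = rho2eps lam ε := by
  exact ⟨1/4, by norm_num, NoSep.density lam (by linarith) h2.le, NoSep.charpoly_rho lam,
    NoSep.not_sep lam h1, NoSep.no_sep_map lam h1 h2⟩
end
end

section
/- Let λ1 ≥ λ2 ≥ λ3 ≥ λ4 ≥ 0 with λ1 + λ2 + λ3 + λ4 = 1 and suppose 1 − λ1 − 2λ2 ≥ 0. Then there exists a non-entangling (NE) map Λ such that Λ(ρ_λ) = σ_λ, where ρ_λ = λ1 Φ1 + λ2 |01⟩⟨01| + λ3 Φ2 + λ4 |10⟩⟨10| and σ_λ = λ1 Φ1 + λ2 Φ2 + λ3 Φ3 + λ4 Φ4. -/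
open Matrix Kronecker Polynomial
open scoped ComplexOrder

noncomputable section

/-! ### Auxiliary material for the proof -/

section Aux

lemma sq2pow : ((Real.sqrt 2 : ℂ)) ^ 2 = 2 := by
  norm_cast; rw [Real.sq_sqrt] <;> norm_num

lemma sq2pow4 : ((Real.sqrt 2 : ℂ)) ^ 4 = 4 := by
  have h : ((Real.sqrt 2 : ℂ)) ^ 4 = (((Real.sqrt 2 : ℂ)) ^ 2) ^ 2 := by ring
  rw [h, sq2pow]; norm_num

lemma normSq_sqrt2_inv : Complex.normSq ((Real.sqrt 2 : ℂ))⁻¹ = 1/2 := by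
  rw [← Complex.ofReal_inv, Complex.normSq_ofReal]
  rw [← Real.sqrt_inv]
  rw [Real.mul_self_sqrt] <;> norm_num

/-- product pure state as a 4×4 matrix -/
def pState (u v : Fin 2 → ℂ) : Mat4 :=
  vecMulVec u (star u) ⊗ₖ vecMulVec v (star v)

def xp : Fin 2 → ℂ := ![(Real.sqrt 2 : ℂ)⁻¹, (Real.sqrt 2 : ℂ)⁻¹]
def xm : Fin 2 → ℂ := ![(Real.sqrt 2 : ℂ)⁻¹, -(Real.sqrt 2 : ℂ)⁻¹]
def yp : Fin 2 → ℂ := ![(Real.sqrt 2 : ℂ)⁻¹, (Real.sqrt 2 : ℂ)⁻¹ * Complex.I]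
def ym : Fin 2 → ℂ := ![(Real.sqrt 2 : ℂ)⁻¹, -((Real.sqrt 2 : ℂ)⁻¹ * Complex.I)]
def e0 : Fin 2 → ℂ := ![1, 0]
def e1 : Fin 2 → ℂ := ![0, 1]

lemma bell_complete : ∑ j : Fin 4, ketBra (bell j) (bell j) = (1 : Mat4) := by
  ext ⟨p1, p2⟩ ⟨q1, q2⟩
  fin_cases p1 <;> fin_cases p2 <;> fin_cases q1 <;> fin_cases q2 <;>
    simp [Fin.sum_univ_four, ketBra, bell, ket, Matrix.one_apply, Prod.ext_iff] <;>
    ring_nf <;> simp [sq2pow]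

lemma pair12 : bellProj 0 + bellProj 1 = pState e0 e0 + pState e1 e1 := by
  ext ⟨p1, p2⟩ ⟨q1, q2⟩
  fin_cases p1 <;> fin_cases p2 <;> fin_cases q1 <;> fin_cases q2 <;>
    simp [bellProj, ketBra, bell, ket, pState, vecMulVec_apply, e0, e1, xp, xm, yp, ym,
      Prod.ext_iff, -cons_vecMulVec, -vecMulVec_cons] <;> ring_nf <;> simp [sq2pow, sq2pow4, Complex.I_sq] <;> norm_num
lemma pair34 : bellProj 2 + bellProj 3 = pState e0 e1 + pState e1 e0 := by
  ext ⟨p1, p2⟩ ⟨q1, q2⟩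
  fin_cases p1 <;> fin_cases p2 <;> fin_cases q1 <;> fin_cases q2 <;>
    simp [bellProj, ketBra, bell, ket, pState, vecMulVec_apply, e0, e1, xp, xm, yp, ym,
      Prod.ext_iff, -cons_vecMulVec, -vecMulVec_cons] <;> ring_nf <;> simp [sq2pow, sq2pow4, Complex.I_sq] <;> norm_num
lemma pair13 : bellProj 0 + bellProj 2 = pState xp xp + pState xm xm := by
  ext ⟨p1, p2⟩ ⟨q1, q2⟩
  fin_cases p1 <;> fin_cases p2 <;> fin_cases q1 <;> fin_cases q2 <;>
    simp [bellProj, ketBra, bell, ket, pState, vecMulVec_apply, e0, e1, xp, xm, yp, ym,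
      Prod.ext_iff, -cons_vecMulVec, -vecMulVec_cons] <;> ring_nf <;> simp [sq2pow, sq2pow4, Complex.I_sq] <;> norm_num
lemma pair24 : bellProj 1 + bellProj 3 = pState xp xm + pState xm xp := by
  ext ⟨p1, p2⟩ ⟨q1, q2⟩
  fin_cases p1 <;> fin_cases p2 <;> fin_cases q1 <;> fin_cases q2 <;>
    simp [bellProj, ketBra, bell, ket, pState, vecMulVec_apply, e0, e1, xp, xm, yp, ym,
      Prod.ext_iff, -cons_vecMulVec, -vecMulVec_cons] <;> ring_nf <;> simp [sq2pow, sq2pow4, Complex.I_sq] <;> norm_num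
lemma pair23 : bellProj 1 + bellProj 2 = pState yp yp + pState ym ym := by
  ext ⟨p1, p2⟩ ⟨q1, q2⟩
  fin_cases p1 <;> fin_cases p2 <;> fin_cases q1 <;> fin_cases q2 <;>
    simp [bellProj, ketBra, bell, ket, pState, vecMulVec_apply, e0, e1, xp, xm, yp, ym,
      Prod.ext_iff, -cons_vecMulVec, -vecMulVec_cons] <;> ring_nf <;> simp [sq2pow, sq2pow4, Complex.I_sq] <;> norm_num
lemma pair14 : bellProj 0 + bellProj 3 = pState yp ym + pState ym yp := by
  ext ⟨p1, p2⟩ ⟨q1, q2⟩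
  fin_cases p1 <;> fin_cases p2 <;> fin_cases q1 <;> fin_cases q2 <;>
    simp [bellProj, ketBra, bell, ket, pState, vecMulVec_apply, e0, e1, xp, xm, yp, ym,
      Prod.ext_iff, -cons_vecMulVec, -vecMulVec_cons] <;> ring_nf <;> simp [sq2pow, sq2pow4, Complex.I_sq] <;> norm_num

lemma ketBra_conjT (a b : Vec4) : (ketBra a b)ᴴ = ketBra b a := by
  ext p q; simp [ketBra, conjTranspose_apply]; ring

lemma ketBra_mulVec (a b x : Vec4) :
    ketBra a b *ᵥ x = (star b ⬝ᵥ x) • a := by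
  funext p
  simp [ketBra, mulVec, dotProduct, Finset.sum_mul, Finset.mul_sum]
  exact Finset.sum_congr rfl fun q _ => by ring

lemma dot_smul_vec (b : Vec4) (c : ℂ) (x : Vec4) : b ⬝ᵥ (c • x) = c * (b ⬝ᵥ x) := by
  simp [dotProduct, Finset.mul_sum]
  exact Finset.sum_congr rfl fun q _ => by ring

lemma ketBra_mul_mul (a b : Vec4) (X : Mat4) :
    ketBra a b * X * (ketBra a b)ᴴ = (star b ⬝ᵥ X *ᵥ b) • ketBra a a := by
  ext p q
  simp [ketBra, conjTranspose_apply, mul_apply, dotProduct, mulVec, Finset.sum_mul,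
    Finset.mul_sum, Matrix.smul_apply]
  rw [Finset.sum_comm]
  refine Finset.sum_congr rfl fun r _ => Finset.sum_congr rfl fun s _ => by ring

lemma ketBra_mul_ketBra (a b c d : Vec4) :
    ketBra a b * ketBra c d = (star b ⬝ᵥ c) • ketBra a d := by
  ext p q
  simp [ketBra, mul_apply, dotProduct, Finset.sum_mul, Matrix.smul_apply]
  exact Finset.sum_congr rfl fun r _ => by ring

set_option maxHeartbeats 1000000 in
lemma bell_dot : ∀ i j : Fin 4, star (bell i) ⬝ᵥ bell j = if i = j then 1 else 0 := by
  intro i j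
  fin_cases i <;> fin_cases j <;>
    simp [dotProduct, Fintype.sum_prod_type, bell, ket, Fin.sum_univ_two, Prod.ext_iff] <;>
    ring_nf <;>
    simp [← Complex.ofReal_inv, ← Complex.ofReal_pow, ← Complex.ofReal_mul] <;>
    norm_num [Real.sq_sqrt]

lemma bell_dot01 : ∀ j : Fin 4,
    star (bell j) ⬝ᵥ ket 0 1 = ![0, 0, (Real.sqrt 2 : ℂ)⁻¹, -(Real.sqrt 2 : ℂ)⁻¹] j := by
  intro j
  fin_cases j <;>
    simp [dotProduct, Fintype.sum_prod_type, bell, ket, Fin.sum_univ_two, Prod.ext_iff]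

lemma bell_dot10 : ∀ j : Fin 4,
    star (bell j) ⬝ᵥ ket 1 0 = ![0, 0, (Real.sqrt 2 : ℂ)⁻¹, (Real.sqrt 2 : ℂ)⁻¹] j := by
  intro j
  fin_cases j <;>
    simp [dotProduct, Fintype.sum_prod_type, bell, ket, Fin.sum_univ_two, Prod.ext_iff]

lemma dot01_bell : ∀ j : Fin 4,
    star (ket 0 1) ⬝ᵥ bell j = ![0, 0, (Real.sqrt 2 : ℂ)⁻¹, -(Real.sqrt 2 : ℂ)⁻¹] j := by
  intro j
  fin_cases j <;>
    simp [dotProduct, Fintype.sum_prod_type, bell, ket, Fin.sum_univ_two, Prod.ext_iff]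

lemma dot10_bell : ∀ j : Fin 4,
    star (ket 1 0) ⬝ᵥ bell j = ![0, 0, (Real.sqrt 2 : ℂ)⁻¹, (Real.sqrt 2 : ℂ)⁻¹] j := by
  intro j
  fin_cases j <;>
    simp [dotProduct, Fintype.sum_prod_type, bell, ket, Fin.sum_univ_two, Prod.ext_iff]

end Aux
section Oct

/-- Fractional matching on K4 with degrees 2*c_i, given partial orderings. -/
lemma octAux (c1 c2 c3 c4 : ℝ) (h12 : c2 ≤ c1) (h34 : c4 ≤ c3)
    (hn2 : 0 ≤ c2) (hn4 : 0 ≤ c4) (hb1 : c1 ≤ 1/2) (hb3 : c3 ≤ 1/2)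
    (hsum : c1 + c2 + c3 + c4 = 1) :
    ∃ w12 w13 w14 w23 w24 w34 : ℝ,
      0 ≤ w12 ∧ 0 ≤ w13 ∧ 0 ≤ w14 ∧ 0 ≤ w23 ∧ 0 ≤ w24 ∧ 0 ≤ w34 ∧
      w12 + w13 + w14 = 2*c1 ∧ w12 + w23 + w24 = 2*c2 ∧
      w13 + w23 + w34 = 2*c3 ∧ w14 + w24 + w34 = 2*c4 := by
    rcases le_total (2*c2) (1 - 2*c1) with h | h
    · exact ⟨2*c2 - 2*c2, c1 + c3 - c2 - c4, 2*c2 + 2*c1 + 2*c4 - 1, 2*c2, 0,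
        1 - 2*c1 - 2*c2, by linarith, by linarith, by linarith, by linarith, le_rfl,
        by linarith, by linarith, by linarith, by linarith, by linarith⟩
    · exact ⟨2*c2 - (1 - 2*c1), c1 + c3 - c2 - c4, 2*c4, 1 - 2*c1, 0, 0,
        by linarith, by linarith, by linarith, by linarith, le_rfl, le_rfl,
        by linarith, by linarith, by linarith, by linarith⟩

lemma unit_lemmas : IsUnitVec e0 ∧ IsUnitVec e1 ∧ IsUnitVec xp ∧ IsUnitVec xm ∧
    IsUnitVec yp ∧ IsUnitVec ym := by
  refine ⟨?_, ?_, ?_, ?_, ?_, ?_⟩ <;>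
    simp [IsUnitVec, Fin.sum_univ_two, e0, e1, xp, xm, yp, ym, Complex.normSq_mul,
      normSq_sqrt2_inv] <;> norm_num

/-- Bell-diagonal states with all weights ≤ 1/2 are separable. -/
lemma bellDiagSep (C : Fin 4 → ℝ) (h0 : ∀ i, 0 ≤ C i) (hb : ∀ i, C i ≤ 1/2)
    (hsum : C 0 + C 1 + C 2 + C 3 = 1) :
    SepState (∑ i : Fin 4, (C i : ℂ) • bellProj i) := by
  -- get a fractional matching
  obtain ⟨w12, w13, w14, w23, w24, w34, n12, n13, n14, n23, n24, n34, d1, d2, d3, d4⟩ :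
      ∃ w12 w13 w14 w23 w24 w34 : ℝ,
      0 ≤ w12 ∧ 0 ≤ w13 ∧ 0 ≤ w14 ∧ 0 ≤ w23 ∧ 0 ≤ w24 ∧ 0 ≤ w34 ∧
      w12 + w13 + w14 = 2*(C 0) ∧ w12 + w23 + w24 = 2*(C 1) ∧
      w13 + w23 + w34 = 2*(C 2) ∧ w14 + w24 + w34 = 2*(C 3) := by
    rcases le_total (C 1) (C 0) with o1 | o1 <;> rcases le_total (C 3) (C 2) with o2 | o2
    · exact octAux (C 0) (C 1) (C 2) (C 3) o1 o2 (h0 1) (h0 3) (hb 0) (hb 2) (by linarith)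
    · obtain ⟨a, b, c, d, e, f, h₁, h₂, h₃, h₄, h₅, h₆, e1', e2', e3', e4'⟩ :=
        octAux (C 0) (C 1) (C 3) (C 2) o1 o2 (h0 1) (h0 2) (hb 0) (hb 3) (by linarith)
      exact ⟨a, c, b, e, d, f, h₁, h₃, h₂, h₅, h₄, h₆, by linarith, by linarith,
        by linarith, by linarith⟩
    · obtain ⟨a, b, c, d, e, f, h₁, h₂, h₃, h₄, h₅, h₆, e1', e2', e3', e4'⟩ :=
        octAux (C 1) (C 0) (C 2) (C 3) o1 o2 (h0 0) (h0 3) (hb 1) (hb 2) (by linarith)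
      exact ⟨a, d, e, b, c, f, h₁, h₄, h₅, h₂, h₃, h₆, by linarith, by linarith,
        by linarith, by linarith⟩
    · obtain ⟨a, b, c, d, e, f, h₁, h₂, h₃, h₄, h₅, h₆, e1', e2', e3', e4'⟩ :=
        octAux (C 1) (C 0) (C 3) (C 2) o1 o2 (h0 0) (h0 2) (hb 1) (hb 3) (by linarith)
      exact ⟨a, e, d, c, b, f, h₁, h₅, h₄, h₃, h₂, h₆, by linarith, by linarith,
        by linarith, by linarith⟩
  refine ⟨12, ![w12/2, w12/2, w34/2, w34/2, w13/2, w13/2, w24/2, w24/2,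
      w23/2, w23/2, w14/2, w14/2],
    ![e0, e1, e0, e1, xp, xm, xp, xm, yp, ym, yp, ym],
    ![e0, e1, e1, e0, xp, xm, xm, xp, yp, ym, ym, yp], ?_, ?_, ?_, ?_, ?_⟩
  · have h2 : (0:ℝ) ≤ 2 := by norm_num
    intro i
    fin_cases i <;>
      first
        | exact div_nonneg n12 h2 | exact div_nonneg n13 h2 | exact div_nonneg n14 h2
        | exact div_nonneg n23 h2 | exact div_nonneg n24 h2 | exact div_nonneg n34 h2
  · simp [Fin.sum_univ_succ]
    linarith
  · obtain ⟨u1, u2, u3, u4, u5, u6⟩ := unit_lemmas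
    intro i
    fin_cases i <;> first | exact u1 | exact u2 | exact u3 | exact u4 | exact u5 | exact u6
  · obtain ⟨u1, u2, u3, u4, u5, u6⟩ := unit_lemmas
    intro i
    fin_cases i <;> first | exact u1 | exact u2 | exact u3 | exact u4 | exact u5 | exact u6
  · have key : ∑ i : Fin 4, (C i : ℂ) • bellProj i
        = ((w12/2 : ℝ) : ℂ) • (bellProj 0 + bellProj 1)
        + ((w34/2 : ℝ) : ℂ) • (bellProj 2 + bellProj 3)
        + ((w13/2 : ℝ) : ℂ) • (bellProj 0 + bellProj 2)
        + ((w24/2 : ℝ) : ℂ) • (bellProj 1 + bellProj 3)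
        + ((w23/2 : ℝ) : ℂ) • (bellProj 1 + bellProj 2)
        + ((w14/2 : ℝ) : ℂ) • (bellProj 0 + bellProj 3) := by
      have hc0 : C 0 = w12/2 + w13/2 + w14/2 := by linarith
      have hc1 : C 1 = w12/2 + w23/2 + w24/2 := by linarith
      have hc2 : C 2 = w13/2 + w23/2 + w34/2 := by linarith
      have hc3 : C 3 = w14/2 + w24/2 + w34/2 := by linarith
      rw [Fin.sum_univ_four, hc0, hc1, hc2, hc3]
      push_cast
      module
    rw [key, pair12, pair34, pair13, pair24, pair23, pair14]
    simp only [Fin.sum_univ_succ, Fin.sum_univ_zero]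
    simp only [Matrix.cons_val_zero, Matrix.cons_val_succ]
    push_cast [pState]
    module

end Oct
section Chan

/-- The column-stochastic matrix defining the measure-Bell/prepare-Bell channel. -/
def Smat (l2 l3 l4 : ℝ) : Fin 4 → Fin 4 → ℝ :=
  ![![1, 0, 0, 0],
    ![0, 1/2, (2*l2-l3)/(2*(l2+l4)), (2*l2-l3)/(2*(l2+l4))],
    ![0, 1/2, l3/(2*(l2+l4)), l3/(2*(l2+l4))],
    ![0, 0, l4/(l2+l4), l4/(l2+l4)]]

def TK (l2 l3 l4 : ℝ) (ij : Fin 4 × Fin 4) : Mat4 :=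
  (Real.sqrt (Smat l2 l3 l4 ij.1 ij.2) : ℂ) • ketBra (bell ij.1) (bell ij.2)

def Tchan (l2 l3 l4 : ℝ) (X : Mat4) : Mat4 :=
  ∑ ij : Fin 4 × Fin 4, TK l2 l3 l4 ij * X * (TK l2 l3 l4 ij)ᴴ

variable {l2 l3 l4 : ℝ}

lemma Smat_nonneg (hl2 : 0 < l2) (h23 : l3 ≤ l2) (hl3 : 0 ≤ l3) (h4 : 0 ≤ l4) :
    ∀ i j, 0 ≤ Smat l2 l3 l4 i j := by
  intro i j
  fin_cases i <;> fin_cases j <;>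
    simp [Smat, Matrix.vecHead, Matrix.vecTail] <;>
    first
      | positivity
      | (apply div_nonneg <;> linarith)

lemma Smat_le_half (hl2 : 0 < l2) (h23 : l3 ≤ l2) (h34 : l4 ≤ l3) (h4 : 0 ≤ l4)
    (hc' : l2 ≤ l3 + l4) :
    ∀ i j, (0:Fin 4) < i → Smat l2 l3 l4 i j ≤ 1/2 := by
  intro i j hi
  fin_cases i <;> fin_cases j <;>
    simp_all [Smat, Matrix.vecHead, Matrix.vecTail] <;>
    first
      | (rw [div_le_iff₀ (by linarith)]; linarith)
      | norm_num

lemma Smat_col (hl2 : 0 < l2) (h4 : 0 ≤ l4) :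
    ∀ j, ∑ i, Smat l2 l3 l4 i j = 1 := by
  intro j
  have h24 : l2 + l4 ≠ 0 := by linarith
  fin_cases j <;>
    simp [Smat, Fin.sum_univ_four, Matrix.vecHead, Matrix.vecTail] <;>
    field_simp <;> ring

lemma Tchan_apply (hS : ∀ i j, 0 ≤ Smat l2 l3 l4 i j) (X : Mat4) :
    Tchan l2 l3 l4 X = ∑ ij : Fin 4 × Fin 4,
      ((Smat l2 l3 l4 ij.1 ij.2 : ℝ) : ℂ) •
        ((star (bell ij.2) ⬝ᵥ X *ᵥ bell ij.2) • bellProj ij.1) := by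
  unfold Tchan TK
  refine Finset.sum_congr rfl fun ij _ => ?_
  rw [conjTranspose_smul, smul_mul_assoc, smul_mul_assoc, mul_smul_comm, ketBra_mul_mul,
    smul_smul]
  rw [Complex.star_def, Complex.conj_ofReal, ← Complex.ofReal_mul,
    Real.mul_self_sqrt (hS ij.1 ij.2)]
  rfl

lemma Tchan_cptp (hl2 : 0 < l2) (h23 : l3 ≤ l2) (hl3 : 0 ≤ l3) (h4 : 0 ≤ l4) :
    IsCPTP (Tchan l2 l3 l4) := by
  have hS := Smat_nonneg hl2 h23 hl3 h4
  have e : Fin 16 ≃ Fin 4 × Fin 4 := by exact ((finProdFinEquiv : Fin 4 × Fin 4 ≃ Fin (4*4))).symm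
  refine ⟨16, fun n => TK l2 l3 l4 (e n), ?_, ?_⟩
  · show (∑ n : Fin 16, (TK l2 l3 l4 (e n))ᴴ * TK l2 l3 l4 (e n)) = 1
    rw [Equiv.sum_comp e (fun ij => (TK l2 l3 l4 ij)ᴴ * TK l2 l3 l4 ij)]
    have step : ∀ ij : Fin 4 × Fin 4, (TK l2 l3 l4 ij)ᴴ * TK l2 l3 l4 ij
        = ((Smat l2 l3 l4 ij.1 ij.2 : ℝ) : ℂ) • ketBra (bell ij.2) (bell ij.2) := by
      intro ij
      rw [TK, conjTranspose_smul, smul_mul_assoc, mul_smul_comm, smul_smul, ketBra_conjT,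
        ketBra_mul_ketBra, bell_dot, if_pos rfl]
      rw [Complex.star_def, Complex.conj_ofReal, ← Complex.ofReal_mul,
        Real.mul_self_sqrt (hS ij.1 ij.2), one_smul]
    rw [Finset.sum_congr rfl fun ij _ => step ij]
    rw [Fintype.sum_prod_type, Finset.sum_comm]
    have : ∀ j : Fin 4, ∑ i : Fin 4, ((Smat l2 l3 l4 i j : ℝ) : ℂ) • ketBra (bell j) (bell j)
        = ketBra (bell j) (bell j) := by
      intro j
      rw [← Finset.sum_smul]
      norm_cast
      rw [Smat_col hl2 h4 j, one_smul]
    rw [Finset.sum_congr rfl fun j _ => this j]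
    exact bell_complete
  · intro X
    show Tchan l2 l3 l4 X = ∑ n : Fin 16, TK l2 l3 l4 (e n) * X * (TK l2 l3 l4 (e n))ᴴ
    exact (Equiv.sum_comp e (fun ij => TK l2 l3 l4 ij * X * (TK l2 l3 l4 ij)ᴴ)).symm

lemma scal_ketBra (a x y b : Vec4) :
    star a ⬝ᵥ (ketBra x y *ᵥ b) = (star y ⬝ᵥ b) * (star a ⬝ᵥ x) := by
  rw [ketBra_mulVec, dot_smul_vec]

lemma mems_scal (l1 l2 l3 l4 : ℝ) (j : Fin 4) :
    star (bell j) ⬝ᵥ (mems l1 l2 l3 l4 *ᵥ bell j)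
      = ((![l1, l3, (l2+l4)/2, (l2+l4)/2] j : ℝ) : ℂ) := by
  unfold mems bellProj
  rw [add_mulVec, add_mulVec, add_mulVec, smul_mulVec, smul_mulVec,
    smul_mulVec, smul_mulVec, dotProduct_add, dotProduct_add, dotProduct_add,
    dot_smul_vec, dot_smul_vec, dot_smul_vec, dot_smul_vec,
    scal_ketBra, scal_ketBra, scal_ketBra, scal_ketBra]
  fin_cases j <;>
    simp [bell_dot, bell_dot01, bell_dot10, dot01_bell, dot10_bell] <;>
    push_cast <;> ring_nf <;>
    simp [← Complex.ofReal_inv, ← Complex.ofReal_pow, ← Complex.ofReal_mul] <;>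
    norm_num [Real.sq_sqrt] <;> ring

lemma Tchan_mems (l1 : ℝ) (hl2 : 0 < l2) (h23 : l3 ≤ l2) (hl3 : 0 ≤ l3) (h4 : 0 ≤ l4) :
    Tchan l2 l3 l4 (mems l1 l2 l3 l4) = bdiag l1 l2 l3 l4 := by
  have hS := Smat_nonneg hl2 h23 hl3 h4
  have h24 : l2 + l4 ≠ 0 := by linarith
  rw [Tchan_apply hS]
  have hq : ∀ ij : Fin 4 × Fin 4, ((Smat l2 l3 l4 ij.1 ij.2 : ℝ) : ℂ) •
        ((star (bell ij.2) ⬝ᵥ mems l1 l2 l3 l4 *ᵥ bell ij.2) • bellProj ij.1)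
      = ((Smat l2 l3 l4 ij.1 ij.2 * ![l1, l3, (l2+l4)/2, (l2+l4)/2] ij.2 : ℝ) : ℂ)
          • bellProj ij.1 := by
    intro ij
    rw [mems_scal, smul_smul, ← Complex.ofReal_mul]
  rw [Finset.sum_congr rfl fun ij _ => hq ij, Fintype.sum_prod_type]
  have hrow : ∀ i : Fin 4, ∑ j : Fin 4,
      ((Smat l2 l3 l4 i j * ![l1, l3, (l2+l4)/2, (l2+l4)/2] j : ℝ) : ℂ) • bellProj i
      = ((![l1, l2, l3, l4] i : ℝ) : ℂ) • bellProj i := by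
    intro i
    rw [← Finset.sum_smul]
    norm_cast
    have : ∑ j : Fin 4, Smat l2 l3 l4 i j * ![l1, l3, (l2+l4)/2, (l2+l4)/2] j
        = ![l1, l2, l3, l4] i := by
      fin_cases i <;> simp [Smat, Fin.sum_univ_four] <;> field_simp <;> ring
    rw [this]
  rw [Finset.sum_congr rfl fun i _ => hrow i, Fin.sum_univ_four]
  simp [bdiag]

end Chan
section Sep

lemma mulVec_sum {n : ℕ} (c : Fin n → ℝ) (M : Fin n → Mat4) (b : Vec4) :
    (∑ k, (c k : ℂ) • M k) *ᵥ b = ∑ k, (c k : ℂ) • (M k *ᵥ b) := by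
  funext p
  simp only [Matrix.mulVec, dotProduct, Matrix.sum_apply, Matrix.smul_apply,
    Finset.sum_apply, Pi.smul_apply, smul_eq_mul, Finset.sum_mul]
  rw [Finset.sum_comm]
  refine Finset.sum_congr rfl fun k _ => ?_
  rw [Finset.mul_sum]
  exact Finset.sum_congr rfl fun x _ => by ring

lemma dot_sum {n : ℕ} (c : Fin n → ℝ) (w : Fin n → Vec4) (b : Vec4) :
    b ⬝ᵥ (∑ k, (c k : ℂ) • w k) = ∑ k, (c k : ℂ) * (b ⬝ᵥ w k) := by
  simp only [dotProduct, Finset.sum_apply, Pi.smul_apply, smul_eq_mul,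
    Finset.mul_sum]
  rw [Finset.sum_comm]
  refine Finset.sum_congr rfl fun k _ => Finset.sum_congr rfl fun p _ => by ring

lemma dot_star_comm (x y : Vec4) : star x ⬝ᵥ y = star (star y ⬝ᵥ x) := by
  simp only [dotProduct, star_sum, star_mul', star_star, Pi.star_apply]
  exact Finset.sum_congr rfl fun p _ => by ring

lemma pState_ketBra (u v : Fin 2 → ℂ) :
    pState u v = ketBra (fun p => u p.1 * v p.2) (fun p => u p.1 * v p.2) := by
  ext p q
  simp [pState, vecMulVec_apply, Matrix.kroneckerMap_apply, ketBra]
  ring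

lemma scal_pState (u v : Fin 2 → ℂ) (b : Vec4) :
    star b ⬝ᵥ (pState u v *ᵥ b)
      = (Complex.normSq (star b ⬝ᵥ (fun p : Q2 => u p.1 * v p.2)) : ℂ) := by
  rw [pState_ketBra, scal_ketBra, dot_star_comm, Complex.star_def,
    Complex.normSq_eq_conj_mul_self]

lemma z_val0 (u v : Fin 2 → ℂ) :
    star (bell 0) ⬝ᵥ (fun p : Q2 => u p.1 * v p.2)
      = (Real.sqrt 2 : ℂ)⁻¹ * (u 0 * v 0 + u 1 * v 1) := by
  simp [bell, ket, dotProduct, Fintype.sum_prod_type, Fin.sum_univ_two, Prod.ext_iff,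
    map_inv₀, Complex.conj_ofReal]; ring
lemma z_val1 (u v : Fin 2 → ℂ) :
    star (bell 1) ⬝ᵥ (fun p : Q2 => u p.1 * v p.2)
      = (Real.sqrt 2 : ℂ)⁻¹ * (u 0 * v 0 - u 1 * v 1) := by
  simp [bell, ket, dotProduct, Fintype.sum_prod_type, Fin.sum_univ_two, Prod.ext_iff,
    map_inv₀, Complex.conj_ofReal]; ring
lemma z_val2 (u v : Fin 2 → ℂ) :
    star (bell 2) ⬝ᵥ (fun p : Q2 => u p.1 * v p.2)
      = (Real.sqrt 2 : ℂ)⁻¹ * (u 1 * v 0 + u 0 * v 1) := by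
  simp [bell, ket, dotProduct, Fintype.sum_prod_type, Fin.sum_univ_two, Prod.ext_iff,
    map_inv₀, Complex.conj_ofReal]; ring
lemma z_val3 (u v : Fin 2 → ℂ) :
    star (bell 3) ⬝ᵥ (fun p : Q2 => u p.1 * v p.2)
      = (Real.sqrt 2 : ℂ)⁻¹ * (u 1 * v 0 - u 0 * v 1) := by
  simp [bell, ket, dotProduct, Fintype.sum_prod_type, Fin.sum_univ_two, Prod.ext_iff,
    map_inv₀, Complex.conj_ofReal]; ring

lemma key_sum (a b c d : ℂ) :
    Complex.normSq (a*c + b*d) + Complex.normSq (a*c - b*d)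
    + Complex.normSq (b*c + a*d) + Complex.normSq (b*c - a*d)
    = 2 * ((Complex.normSq a + Complex.normSq b) * (Complex.normSq c + Complex.normSq d)) := by
  simp [Complex.normSq_apply, Complex.add_re, Complex.add_im, Complex.sub_re, Complex.sub_im,
    Complex.mul_re, Complex.mul_im]
  ring

lemma key_CS (a b c d : ℂ) :
    Complex.normSq (a*c + b*d)
      ≤ (Complex.normSq a + Complex.normSq b) * (Complex.normSq c + Complex.normSq d) := by
  have h : (Complex.normSq a + Complex.normSq b) * (Complex.normSq c + Complex.normSq d)
      - Complex.normSq (a*c + b*d)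
      = Complex.normSq (a * (starRingEnd ℂ) d - b * (starRingEnd ℂ) c) := by
    simp [Complex.normSq_apply, Complex.add_re, Complex.add_im, Complex.sub_re,
      Complex.sub_im, Complex.mul_re, Complex.mul_im]
    ring
  have h2 := Complex.normSq_nonneg (a * (starRingEnd ℂ) d - b * (starRingEnd ℂ) c)
  linarith

/-- the four Bell overlaps of a product state -/
def NQ (u v : Fin 2 → ℂ) (j : Fin 4) : ℝ :=
  Complex.normSq (star (bell j) ⬝ᵥ (fun p : Q2 => u p.1 * v p.2))

lemma NQ_nonneg (u v : Fin 2 → ℂ) (j : Fin 4) : 0 ≤ NQ u v j :=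
  Complex.normSq_nonneg _

lemma unit_two {u : Fin 2 → ℂ} (hu : IsUnitVec u) :
    Complex.normSq (u 0) + Complex.normSq (u 1) = 1 := by
  simpa [IsUnitVec, Fin.sum_univ_two] using hu

lemma NQ_sum (u v : Fin 2 → ℂ) (hu : IsUnitVec u) (hv : IsUnitVec v) :
    NQ u v 0 + NQ u v 1 + NQ u v 2 + NQ u v 3 = 1 := by
  unfold NQ
  rw [z_val0, z_val1, z_val2, z_val3]
  simp only [Complex.normSq_mul, normSq_sqrt2_inv]
  have hks := key_sum (u 0) (u 1) (v 0) (v 1)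
  have hu2 := unit_two hu
  have hv2 := unit_two hv
  nlinarith [hks]

lemma NQ_zero_le (u v : Fin 2 → ℂ) (hu : IsUnitVec u) (hv : IsUnitVec v) :
    NQ u v 0 ≤ 1/2 := by
  unfold NQ
  rw [z_val0]
  simp only [Complex.normSq_mul, normSq_sqrt2_inv]
  have hcs := key_CS (u 0) (u 1) (v 0) (v 1)
  have hu2 := unit_two hu
  have hv2 := unit_two hv
  nlinarith [hcs]

lemma Tchan_sep (hl2 : 0 < l2) (h23 : l3 ≤ l2) (h34 : l4 ≤ l3) (h4 : 0 ≤ l4)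
    (hc' : l2 ≤ l3 + l4) :
    ∀ ρ, SepState ρ → SepState (Tchan l2 l3 l4 ρ) := by
  have hl3 : 0 ≤ l3 := le_trans h4 h34
  have hS := Smat_nonneg hl2 h23 hl3 h4
  have hShalf := Smat_le_half hl2 h23 h34 h4 hc'
  rintro ρ ⟨n, p, u, v, hp0, hp1, hu, hv, rfl⟩
  set Q : Fin 4 → ℝ := fun j => ∑ k, p k * NQ (u k) (v k) j with hQdef
  set C : Fin 4 → ℝ := fun i => ∑ j, Smat l2 l3 l4 i j * Q j with hCdef
  have hscal : ∀ j : Fin 4,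
      star (bell j) ⬝ᵥ ((∑ k, (p k : ℂ) •
        (vecMulVec (u k) (star (u k)) ⊗ₖ vecMulVec (v k) (star (v k)))) *ᵥ bell j)
      = ((Q j : ℝ) : ℂ) := by
    intro j
    rw [mulVec_sum, dot_sum]
    have : ∀ k, (p k : ℂ) * (star (bell j) ⬝ᵥ
          ((vecMulVec (u k) (star (u k)) ⊗ₖ vecMulVec (v k) (star (v k))) *ᵥ bell j))
        = ((p k * NQ (u k) (v k) j : ℝ) : ℂ) := by
      intro k
      rw [show (vecMulVec (u k) (star (u k)) ⊗ₖ vecMulVec (v k) (star (v k)))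
          = pState (u k) (v k) from rfl, scal_pState]
      push_cast
      rfl
    rw [Finset.sum_congr rfl fun k _ => this k]
    rw [hQdef]
    push_cast
    rfl
  have hform : Tchan l2 l3 l4 (∑ k, (p k : ℂ) •
        (vecMulVec (u k) (star (u k)) ⊗ₖ vecMulVec (v k) (star (v k))))
      = ∑ i : Fin 4, ((C i : ℝ) : ℂ) • bellProj i := by
    rw [Tchan_apply hS]
    have hterm : ∀ ij : Fin 4 × Fin 4, ((Smat l2 l3 l4 ij.1 ij.2 : ℝ) : ℂ) •
        ((star (bell ij.2) ⬝ᵥ (∑ k, (p k : ℂ) •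
          (vecMulVec (u k) (star (u k)) ⊗ₖ vecMulVec (v k) (star (v k)))) *ᵥ bell ij.2)
            • bellProj ij.1)
        = ((Smat l2 l3 l4 ij.1 ij.2 * Q ij.2 : ℝ) : ℂ) • bellProj ij.1 := by
      intro ij
      rw [hscal, smul_smul, ← Complex.ofReal_mul]
    rw [Finset.sum_congr rfl fun ij _ => hterm ij, Fintype.sum_prod_type]
    refine Finset.sum_congr rfl fun i _ => ?_
    simp only [← Finset.sum_smul]
    norm_cast
  rw [hform]
  -- bounds on Q
  have hQnn : ∀ j, 0 ≤ Q j := by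
    intro j
    exact Finset.sum_nonneg fun k _ => mul_nonneg (hp0 k) (NQ_nonneg _ _ j)
  have hQsum : Q 0 + Q 1 + Q 2 + Q 3 = 1 := by
    rw [hQdef]
    simp only
    rw [← Finset.sum_add_distrib, ← Finset.sum_add_distrib, ← Finset.sum_add_distrib]
    rw [← hp1]
    refine Finset.sum_congr rfl fun k _ => ?_
    have hnq := NQ_sum (u k) (v k) (hu k) (hv k)
    linear_combination (p k) * hnq
  have hQ0 : Q 0 ≤ 1/2 := by
    rw [hQdef]
    simp only
    calc ∑ k, p k * NQ (u k) (v k) 0 ≤ ∑ k, p k * (1/2) := by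
          refine Finset.sum_le_sum fun k _ => ?_
          exact mul_le_mul_of_nonneg_left (NQ_zero_le (u k) (v k) (hu k) (hv k)) (hp0 k)
      _ = 1/2 := by rw [← Finset.sum_mul, hp1]; norm_num
  -- bounds on C
  have hCnn : ∀ i, 0 ≤ C i :=
    fun i => Finset.sum_nonneg fun j _ => mul_nonneg (hS i j) (hQnn j)
  have hColsum : ∀ j, ∑ i, Smat l2 l3 l4 i j = 1 := Smat_col hl2 h4
  have hCsum : C 0 + C 1 + C 2 + C 3 = 1 := by
    have e0' := hColsum 0
    have e1' := hColsum 1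
    have e2' := hColsum 2
    have e3' := hColsum 3
    simp only [Fin.sum_univ_four] at e0' e1' e2' e3' ⊢
    rw [hCdef]
    simp only [Fin.sum_univ_four]
    linear_combination Q 0 * e0' + Q 1 * e1' + Q 2 * e2' + Q 3 * e3' + hQsum
  have hCb : ∀ i, C i ≤ 1/2 := by
    intro i
    rw [hCdef]
    simp only [Fin.sum_univ_four]
    by_cases hi : i = 0
    · subst hi
      have h00 : Smat l2 l3 l4 0 0 = 1 := by norm_num [Smat]
      have h01 : Smat l2 l3 l4 0 1 = 0 := by norm_num [Smat]
      have h02 : Smat l2 l3 l4 0 2 = 0 := by norm_num [Smat]; rfl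
      have h03 : Smat l2 l3 l4 0 3 = 0 := by norm_num [Smat]; rfl
      rw [h00, h01, h02, h03]
      simpa using hQ0
    · have hipos : (0 : Fin 4) < i := by
        rcases Fin.eq_zero_or_eq_succ i with h | ⟨j, rfl⟩
        · exact absurd h hi
        · exact Fin.succ_pos j
      have b0 := hShalf i 0 hipos
      have b1 := hShalf i 1 hipos
      have b2 := hShalf i 2 hipos
      have b3 := hShalf i 3 hipos
      have m0 : Smat l2 l3 l4 i 0 * Q 0 ≤ 1/2 * Q 0 :=
        mul_le_mul_of_nonneg_right b0 (hQnn 0)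
      have m1 : Smat l2 l3 l4 i 1 * Q 1 ≤ 1/2 * Q 1 :=
        mul_le_mul_of_nonneg_right b1 (hQnn 1)
      have m2 : Smat l2 l3 l4 i 2 * Q 2 ≤ 1/2 * Q 2 :=
        mul_le_mul_of_nonneg_right b2 (hQnn 2)
      have m3 : Smat l2 l3 l4 i 3 * Q 3 ≤ 1/2 * Q 3 :=
        mul_le_mul_of_nonneg_right b3 (hQnn 3)
      linarith [hQnn 0, hQnn 1, hQnn 2, hQnn 3]
  exact bellDiagSep C hCnn hCb hCsum

end Sep

theorem NE_exists_of_spectral_condition (l1 l2 l3 l4 : ℝ)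
    (h12 : l2 ≤ l1) (h23 : l3 ≤ l2) (h34 : l4 ≤ l3) (h4 : 0 ≤ l4)
    (hsum : l1 + l2 + l3 + l4 = 1) (hc : 0 ≤ 1 - l1 - 2 * l2) :
    ∃ T : Mat4 → Mat4, IsNE T ∧ T (mems l1 l2 l3 l4) = bdiag l1 l2 l3 l4 := by
  by_cases h0 : l2 = 0
  · -- degenerate case: ρ = σ = Φ1, use the identity channel
    have hl3 : l3 = 0 := le_antisymm (h0 ▸ h23) (le_trans h4 h34)
    have hl4 : l4 = 0 := le_antisymm (hl3 ▸ h34) h4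
    have hl1 : l1 = 1 := by rw [h0, hl3, hl4] at hsum; linarith
    refine ⟨id, ⟨⟨1, fun _ => 1, by simp, fun X => by simp⟩, fun ρ h => h⟩, ?_⟩
    rw [h0, hl3, hl4, hl1]
    simp [mems, bdiag]
  · have hl2 : 0 < l2 := lt_of_le_of_ne (le_trans (le_trans h4 h34) h23) (Ne.symm h0)
    have hc' : l2 ≤ l3 + l4 := by linarith
    have hl3 : 0 ≤ l3 := le_trans h4 h34
    exact ⟨Tchan l2 l3 l4,
      ⟨Tchan_cptp hl2 h23 hl3 h4, Tchan_sep hl2 h23 h34 h4 hc'⟩,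
      Tchan_mems l1 hl2 h23 hl3 h4⟩
end
end

section
/- For every λ ∈ (1/2, 1) there exists no non-entangling (NE) map Λ satisfying Λ(λ Φ1 + (1−λ)|01⟩⟨01|) = λ Φ1 + (1−λ) Φ2. -/
open Matrix Kronecker Polynomial
open scoped ComplexOrder

noncomputable section

lemma kb_psd (x : Vec4) : (ketBra x x).PosSemidef := by
  rw [Matrix.posSemidef_iff_dotProduct_mulVec]
  constructor
  · ext p q
    simp [ketBra, Matrix.conjTranspose_apply, mul_comm]
  · intro y
    have h : star y ⬝ᵥ (ketBra x x) *ᵥ y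
        = star (∑ q, star (x q) * y q) * (∑ q, star (x q) * y q) := by
      simp only [dotProduct, Matrix.mulVec, ketBra, star_sum, star_mul', star_star, Pi.star_apply]
      rw [Finset.sum_mul_sum]
      refine Finset.sum_congr rfl fun p _ => ?_
      rw [Finset.mul_sum]
      refine Finset.sum_congr rfl fun q _ => ?_
      ring
    rw [h]
    exact star_mul_self_nonneg _

lemma trace_mul_nonneg {A B : Mat4} (hA : A.PosSemidef) (hB : B.PosSemidef) :
    0 ≤ (A * B).trace := by
  open scoped MatrixOrder in obtain ⟨C, rfl⟩ := CStarAlgebra.nonneg_iff_eq_star_mul_self.mp hB.nonneg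
  rw [← Matrix.mul_assoc, Matrix.trace_mul_cycle]
  have hP : (C * A * Cᴴ).PosSemidef := hA.mul_mul_conjTranspose_same C
  have hdiag : ∀ i : Q2, 0 ≤ (C * A * Cᴴ) i i := by
    intro i
    exact hP.diag_nonneg
  exact Finset.sum_nonneg fun i _ => hdiag i

lemma trace_kb_mul (x y : Vec4) :
    (ketBra x x * ketBra y y).trace
      = (∑ p, star (x p) * y p) * star (∑ p, star (x p) * y p) := by
  simp only [Matrix.trace, Matrix.diag, Matrix.mul_apply, ketBra, star_sum, star_mul', star_star]
  rw [Finset.sum_mul_sum]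
  rw [Finset.sum_comm]
  refine Finset.sum_congr rfl fun p _ => ?_
  refine Finset.sum_congr rfl fun q _ => ?_
  ring

lemma kron_kb (u v : Fin 2 → ℂ) :
    vecMulVec u (star u) ⊗ₖ vecMulVec v (star v)
      = ketBra (fun p => u p.1 * v p.2) (fun p => u p.1 * v p.2) := by
  ext ⟨i, j⟩ ⟨k, l⟩
  simp [Matrix.vecMulVec, ketBra, Matrix.kroneckerMap_apply]
  ring

def uP : Vec4 := ket 0 0 + ket 1 1
def uM : Vec4 := ket 0 0 - ket 1 1

lemma star_sqrt2_inv : star ((Real.sqrt 2 : ℂ))⁻¹ = ((Real.sqrt 2 : ℂ))⁻¹ := by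
  simp [Complex.star_def, map_inv₀, Complex.conj_ofReal]

lemma sqrt2_inv_sq : ((Real.sqrt 2 : ℂ))⁻¹ * ((Real.sqrt 2 : ℂ))⁻¹ = 1/2 := by
  rw [← mul_inv]
  norm_cast
  rw [Real.mul_self_sqrt (by norm_num)]
  norm_num

lemma bellProj0_eq : bellProj 0 = (1/2 : ℂ) • ketBra uP uP := by
  ext p q
  show bell 0 p * star (bell 0 q) = (1/2 : ℂ) * (uP p * star (uP q))
  have : bell 0 = fun p => (Real.sqrt 2 : ℂ)⁻¹ * uP p := by
    funext r
    simp [bell, uP, Pi.smul_apply, smul_eq_mul, mul_add, mul_sub]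
  rw [this]
  simp only [star_mul', star_sqrt2_inv]
  linear_combination (uP p * star (uP q)) * sqrt2_inv_sq

lemma bellProj1_eq : bellProj 1 = (1/2 : ℂ) • ketBra uM uM := by
  ext p q
  show bell 1 p * star (bell 1 q) = (1/2 : ℂ) * (uM p * star (uM q))
  have : bell 1 = fun p => (Real.sqrt 2 : ℂ)⁻¹ * uM p := by
    funext r
    simp [bell, uM, Pi.smul_apply, smul_eq_mul, mul_add, mul_sub]
  rw [this]
  simp only [star_mul', star_sqrt2_inv]
  linear_combination (uM p * star (uM q)) * sqrt2_inv_sq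

lemma ipPP : (∑ p : Q2, star (uP p) * uP p) = 2 := by
  simp [uP, ket, Fintype.sum_prod_type, Fin.sum_univ_two, Prod.ext_iff]
  norm_num

lemma ipPM : (∑ p : Q2, star (uP p) * uM p) = 0 := by
  simp [uP, uM, ket, Fintype.sum_prod_type, Fin.sum_univ_two, Prod.ext_iff]

lemma ipMP : (∑ p : Q2, star (uM p) * uP p) = 0 := by
  simp [uP, uM, ket, Fintype.sum_prod_type, Fin.sum_univ_two, Prod.ext_iff]

lemma ipMM : (∑ p : Q2, star (uM p) * uM p) = 2 := by
  simp [uM, ket, Fintype.sum_prod_type, Fin.sum_univ_two, Prod.ext_iff]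
  norm_num

lemma tr_bb (x y : Vec4) (c d : ℂ) :
    (((c • ketBra x x) : Mat4) * (d • ketBra y y)).trace
      = c * d * ((∑ p, star (x p) * y p) * star (∑ p, star (x p) * y p)) := by
  rw [Matrix.smul_mul, Matrix.mul_smul, Matrix.trace_smul, Matrix.trace_smul, trace_kb_mul]
  simp [smul_eq_mul]
  ring

lemma tr_11 : (bellProj 0 * bellProj 0).trace = 1 := by
  rw [bellProj0_eq, tr_bb, ipPP]
  norm_num

lemma tr_12 : (bellProj 0 * bellProj 1).trace = 0 := by
  rw [bellProj0_eq, bellProj1_eq, tr_bb, ipPM]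
  norm_num

lemma tr_21 : (bellProj 1 * bellProj 0).trace = 0 := by
  rw [bellProj0_eq, bellProj1_eq, tr_bb, ipMP]
  norm_num

lemma tr_22 : (bellProj 1 * bellProj 1).trace = 1 := by
  rw [bellProj1_eq, tr_bb, ipMM]
  norm_num

lemma tr_bell0 : (bellProj 0).trace = 1 := by
  rw [bellProj0_eq, Matrix.trace_smul]
  have : (ketBra uP uP).trace = ∑ p : Q2, uP p * star (uP p) := by
    simp [Matrix.trace, Matrix.diag, ketBra]
  rw [this]
  simp [uP, ket, Fintype.sum_prod_type, Fin.sum_univ_two, Prod.ext_iff]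
  norm_num

lemma resolution :
    bellProj 0 + bellProj 1 + ketBra (ket 0 1) (ket 0 1) + ketBra (ket 1 0) (ket 1 0)
      = (1 : Mat4) := by
  rw [bellProj0_eq, bellProj1_eq]
  ext ⟨i, j⟩ ⟨k, l⟩
  fin_cases i <;> fin_cases j <;> fin_cases k <;> fin_cases l <;>
    simp [ketBra, uP, uM, ket, Matrix.one_apply, Prod.ext_iff] <;> norm_num

lemma cs_plus (u v : Fin 2 → ℂ) (hu : IsUnitVec u) (hv : IsUnitVec v) :
    Complex.normSq (u 0 * v 0 + u 1 * v 1) ≤ 1 := by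
  have hu' : Complex.normSq (u 0) + Complex.normSq (u 1) = 1 := by
    simpa [IsUnitVec, Fin.sum_univ_two] using hu
  have hv' : Complex.normSq (v 0) + Complex.normSq (v 1) = 1 := by
    simpa [IsUnitVec, Fin.sum_univ_two] using hv
  have key : (Complex.normSq (u 0) + Complex.normSq (u 1))
      * (Complex.normSq (v 0) + Complex.normSq (v 1)) = 1 := by
    rw [hu', hv']; norm_num
  set a := u 0; set b := u 1; set c := v 0; set d := v 1
  simp only [Complex.normSq_apply, Complex.add_re, Complex.add_im, Complex.mul_re,
    Complex.mul_im] at key ⊢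
  nlinarith [sq_nonneg (a.re*d.re + a.im*d.im - b.re*c.re - b.im*c.im),
    sq_nonneg (a.im*d.re - a.re*d.im - b.im*c.re + b.re*c.im)]

lemma cs_minus (u v : Fin 2 → ℂ) (hu : IsUnitVec u) (hv : IsUnitVec v) :
    Complex.normSq (u 0 * v 0 - u 1 * v 1) ≤ 1 := by
  have hu' : Complex.normSq (u 0) + Complex.normSq (u 1) = 1 := by
    simpa [IsUnitVec, Fin.sum_univ_two] using hu
  have hv' : Complex.normSq (v 0) + Complex.normSq (v 1) = 1 := by
    simpa [IsUnitVec, Fin.sum_univ_two] using hv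
  have key : (Complex.normSq (u 0) + Complex.normSq (u 1))
      * (Complex.normSq (v 0) + Complex.normSq (v 1)) = 1 := by
    rw [hu', hv']; norm_num
  set a := u 0; set b := u 1; set c := v 0; set d := v 1
  simp only [Complex.normSq_apply, Complex.sub_re, Complex.sub_im, Complex.mul_re,
    Complex.mul_im] at key ⊢
  nlinarith [sq_nonneg (a.re*d.re + a.im*d.im + b.re*c.re + b.im*c.im),
    sq_nonneg (a.im*d.re - a.re*d.im + b.im*c.re - b.re*c.im)]

/-- Main separability bound: trace of (ketBra x x) against a separable state,
bounded via per-product-state overlap bound. -/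
lemma sep_trace_le (x : Vec4) {ρ : Mat4} (hρ : SepState ρ) (M : ℝ) (hM : 0 ≤ M)
    (hx : ∀ u v : Fin 2 → ℂ, IsUnitVec u → IsUnitVec v →
      Complex.normSq (∑ p : Q2, star (x p) * (u p.1 * v p.2)) ≤ M) :
    ((ketBra x x * ρ).trace).re ≤ M := by
  obtain ⟨n, p, u, v, hp0, hp1, hu, hv, rfl⟩ := hρ
  rw [Matrix.mul_sum, Matrix.trace_sum]
  simp_rw [Matrix.mul_smul, Matrix.trace_smul, kron_kb, trace_kb_mul, smul_eq_mul]
  rw [Complex.re_sum]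
  have hterm : ∀ k : Fin n,
      ((p k : ℂ) * ((∑ q : Q2, star (x q) * (u k q.1 * v k q.2))
        * star (∑ q : Q2, star (x q) * (u k q.1 * v k q.2)))).re ≤ p k * M := by
    intro k
    set z := ∑ q : Q2, star (x q) * (u k q.1 * v k q.2) with hz
    have h1 : z * star z = (Complex.normSq z : ℂ) := by
      rw [Complex.star_def, Complex.mul_conj]
    rw [h1, ← Complex.ofReal_mul, Complex.ofReal_re]
    exact mul_le_mul_of_nonneg_left (hx (u k) (v k) (hu k) (hv k)) (hp0 k)
  calc (∑ k, ((p k : ℂ) * ((∑ q : Q2, star (x q) * (u k q.1 * v k q.2))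
        * star (∑ q : Q2, star (x q) * (u k q.1 * v k q.2)))).re)
      ≤ ∑ k, p k * M := Finset.sum_le_sum fun k _ => hterm k
    _ = M := by rw [← Finset.sum_mul, hp1, one_mul]

lemma re_half_mul (z : ℂ) : ((1/2 : ℂ) * z).re = (1/2) * z.re := by
  have : ((1/2 : ℂ)) = ((1/2 : ℝ) : ℂ) := by norm_num
  rw [this, Complex.re_ofReal_mul]

lemma sep_bell0 {ρ : Mat4} (hρ : SepState ρ) : ((bellProj 0 * ρ).trace).re ≤ 1/2 := by
  have h : ((ketBra uP uP * ρ).trace).re ≤ 1 := by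
    refine sep_trace_le uP hρ 1 (by norm_num) ?_
    intro u v hu hv
    have he : (∑ p : Q2, star (uP p) * (u p.1 * v p.2)) = u 0 * v 0 + u 1 * v 1 := by
      simp [uP, ket, Fintype.sum_prod_type, Fin.sum_univ_two, Prod.ext_iff]
    rw [he]
    exact cs_plus u v hu hv
  rw [bellProj0_eq, Matrix.smul_mul, Matrix.trace_smul, smul_eq_mul, re_half_mul]
  linarith

lemma sep_bell1 {ρ : Mat4} (hρ : SepState ρ) : ((bellProj 1 * ρ).trace).re ≤ 1/2 := by
  have h : ((ketBra uM uM * ρ).trace).re ≤ 1 := by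
    refine sep_trace_le uM hρ 1 (by norm_num) ?_
    intro u v hu hv
    have he : (∑ p : Q2, star (uM p) * (u p.1 * v p.2)) = u 0 * v 0 - u 1 * v 1 := by
      simp [uM, ket, Fintype.sum_prod_type, Fin.sum_univ_two, Prod.ext_iff]
      ring
    rw [he]
    exact cs_minus u v hu hv
  rw [bellProj1_eq, Matrix.smul_mul, Matrix.trace_smul, smul_eq_mul, re_half_mul]
  linarith

section Kraus

variable {k : ℕ}

lemma kraus_lin (K : Fin k → Mat4) (a b : ℂ) (X Y : Mat4) :
    (∑ i, K i * (a • X + b • Y) * (K i)ᴴ)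
      = a • (∑ i, K i * X * (K i)ᴴ) + b • (∑ i, K i * Y * (K i)ᴴ) := by
  rw [Finset.smul_sum, Finset.smul_sum, ← Finset.sum_add_distrib]
  refine Finset.sum_congr rfl fun i _ => ?_
  simp [Matrix.mul_add, Matrix.add_mul, Matrix.mul_smul, Matrix.smul_mul]

lemma kraus_lin3 (K : Fin k → Mat4) (a b c : ℂ) (X Y Z : Mat4) :
    (∑ i, K i * (a • X + b • Y + c • Z) * (K i)ᴴ)
      = a • (∑ i, K i * X * (K i)ᴴ) + b • (∑ i, K i * Y * (K i)ᴴ)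
        + c • (∑ i, K i * Z * (K i)ᴴ) := by
  rw [Finset.smul_sum, Finset.smul_sum, Finset.smul_sum, ← Finset.sum_add_distrib,
    ← Finset.sum_add_distrib]
  refine Finset.sum_congr rfl fun i _ => ?_
  simp [Matrix.mul_add, Matrix.add_mul, Matrix.mul_smul, Matrix.smul_mul]

lemma kraus_psd (K : Fin k → Mat4) {X : Mat4} (hX : X.PosSemidef) :
    (∑ i, K i * X * (K i)ᴴ).PosSemidef :=
  Finset.sum_induction _ _ (fun _ _ ha hb => ha.add hb) Matrix.PosSemidef.zero
    (fun i _ => hX.mul_mul_conjTranspose_same (K i))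

lemma kraus_trace (K : Fin k → Mat4) (hK : ∑ i, (K i)ᴴ * K i = 1) (X : Mat4) :
    (∑ i, K i * X * (K i)ᴴ).trace = X.trace := by
  rw [Matrix.trace_sum]
  have h : ∀ i : Fin k, (K i * X * (K i)ᴴ).trace = ((K i)ᴴ * K i * X).trace := fun i =>
    Matrix.trace_mul_cycle (K i) X (K i)ᴴ
  simp_rw [h]
  rw [← Matrix.trace_sum, ← Finset.sum_mul, hK, Matrix.one_mul]

end Kraus

lemma sep_P01 : SepState (ketBra (ket 0 1) (ket 0 1)) := by
  refine ⟨1, fun _ => 1, fun _ => ![1, 0], fun _ => ![0, 1],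
    fun _ => by norm_num, by simp, fun _ => by simp [IsUnitVec, Fin.sum_univ_two],
    fun _ => by simp [IsUnitVec, Fin.sum_univ_two], ?_⟩
  rw [Fin.sum_univ_one, kron_kb]
  have hw : (fun p : Q2 => (![ (1:ℂ), 0] p.1) * (![ (0:ℂ), 1] p.2)) = ket 0 1 := by
    funext p
    obtain ⟨i, j⟩ := p
    fin_cases i <;> fin_cases j <;> simp [ket, Prod.ext_iff]
  rw [hw]
  norm_num

lemma sep_P10 : SepState (ketBra (ket 1 0) (ket 1 0)) := by
  refine ⟨1, fun _ => 1, fun _ => ![0, 1], fun _ => ![1, 0],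
    fun _ => by norm_num, by simp, fun _ => by simp [IsUnitVec, Fin.sum_univ_two],
    fun _ => by simp [IsUnitVec, Fin.sum_univ_two], ?_⟩
  rw [Fin.sum_univ_one, kron_kb]
  have hw : (fun p : Q2 => (![ (0:ℂ), 1] p.1) * (![ (1:ℂ), 0] p.2)) = ket 1 0 := by
    funext p
    obtain ⟨i, j⟩ := p
    fin_cases i <;> fin_cases j <;> simp [ket, Prod.ext_iff]
  rw [hw]
  norm_num

set_option maxHeartbeats 2000000 in
lemma sep4 (s t : ℝ) (hst : s^2 + t^2 = 1) :
    SepState (((2*s^2*t^2 : ℝ) : ℂ) • bellProj 0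
      + ((t^4 : ℝ) : ℂ) • ketBra (ket 0 1) (ket 0 1)
      + ((s^4 : ℝ) : ℂ) • ketBra (ket 1 0) (ket 1 0)) := by
  refine ⟨4, fun _ => 1/4,
    fun m => ![(t:ℂ), (![1, Complex.I, -1, -Complex.I] m) * s],
    fun m => ![(s:ℂ), star (![1, Complex.I, -1, -Complex.I] m) * t],
    fun _ => by norm_num, by norm_num [Fin.sum_univ_four], ?_, ?_, ?_⟩
  · intro m
    fin_cases m <;>
      simp [IsUnitVec, Fin.sum_univ_two, Complex.normSq_mul, Complex.normSq_ofReal] <;>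
      (try nlinarith [hst])
  · intro m
    fin_cases m <;>
      simp [IsUnitVec, Fin.sum_univ_two, Complex.normSq_mul, Complex.normSq_ofReal] <;>
      (try nlinarith [hst])
  · rw [bellProj0_eq]
    ext ⟨i, j⟩ ⟨kk, l⟩
    rw [Fin.sum_univ_four]
    fin_cases i <;> fin_cases j <;> fin_cases kk <;> fin_cases l <;>
      simp only [Matrix.add_apply, Matrix.smul_apply, Matrix.kroneckerMap_apply,
        Matrix.vecMulVec_apply] <;>
      simp [Matrix.kroneckerMap_apply, Matrix.vecMulVec_apply, ketBra, ket, uP,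
        Prod.ext_iff, Complex.star_def, _root_.map_one, _root_.map_neg, Complex.conj_I,
        Complex.conj_ofReal] <;>
      push_cast <;>
      ring_nf <;>
      simp [Complex.I_sq] <;>
      ring_nf

lemma bellProj_psd (i : Fin 4) : (bellProj i).PosSemidef := kb_psd _

set_option maxHeartbeats 4000000 in
theorem no_NE_rank2 (lam : ℝ) (h1 : 1 / 2 < lam) (h2 : lam < 1) :
    ¬ ∃ T : Mat4 → Mat4, IsNE T ∧
        T ((lam : ℂ) • bellProj 0 + ((1 - lam : ℝ) : ℂ) • ketBra (ket 0 1) (ket 0 1)) =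
          (lam : ℂ) • bellProj 0 + ((1 - lam : ℝ) : ℂ) • bellProj 1 := by
  rintro ⟨T, ⟨⟨k, K, hK, hrep⟩, hNE⟩, heq⟩
  -- linearity of T
  have hTlin2 : ∀ (a b : ℂ) (X Y : Mat4), T (a • X + b • Y) = a • T X + b • T Y := by
    intro a b X Y
    rw [hrep, hrep, hrep]
    exact kraus_lin K a b X Y
  have hTlin3 : ∀ (a b c : ℂ) (X Y Z : Mat4),
      T (a • X + b • Y + c • Z) = a • T X + b • T Y + c • T Z := by
    intro a b c X Y Z
    rw [hrep, hrep, hrep, hrep]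
    exact kraus_lin3 K a b c X Y Z
  -- images of the separable basic states are separable
  have hTP01sep : SepState (T (ketBra (ket 0 1) (ket 0 1))) := hNE _ sep_P01
  have hTP10sep : SepState (T (ketBra (ket 1 0) (ket 1 0))) := hNE _ sep_P10
  have hs1le : ((bellProj 0 * T (ketBra (ket 0 1) (ket 0 1))).trace).re ≤ 1/2 :=
    sep_bell0 hTP01sep
  have hs2le : ((bellProj 1 * T (ketBra (ket 0 1) (ket 0 1))).trace).re ≤ 1/2 :=
    sep_bell1 hTP01sep
  -- positivity facts
  have hTΦ1psd : (T (bellProj 0)).PosSemidef := by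
    rw [hrep]; exact kraus_psd K (bellProj_psd 0)
  have hTP10psd : (T (ketBra (ket 1 0) (ket 1 0))).PosSemidef := by
    rw [hrep]; exact kraus_psd K (kb_psd _)
  have hr1 : 0 ≤ ((bellProj 0 * T (ketBra (ket 1 0) (ket 1 0))).trace).re :=
    (Complex.nonneg_iff.mp (trace_mul_nonneg (bellProj_psd 0) hTP10psd)).1
  have ht2nn : 0 ≤ ((bellProj 1 * T (bellProj 0)).trace).re :=
    (Complex.nonneg_iff.mp (trace_mul_nonneg (bellProj_psd 1) hTΦ1psd)).1
  -- trace preservation: t1 + t2 ≤ 1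
  have htrT : (T (bellProj 0)).trace = 1 := by
    rw [hrep, kraus_trace K hK]; exact tr_bell0
  have hsplit : (bellProj 0 * T (bellProj 0)).trace + (bellProj 1 * T (bellProj 0)).trace
      + (ketBra (ket 0 1) (ket 0 1) * T (bellProj 0)).trace
      + (ketBra (ket 1 0) (ket 1 0) * T (bellProj 0)).trace = 1 := by
    rw [← Matrix.trace_add, ← Matrix.trace_add, ← Matrix.trace_add, ← Matrix.add_mul,
      ← Matrix.add_mul, ← Matrix.add_mul, resolution, Matrix.one_mul, htrT]
  have hq1nn : 0 ≤ ((ketBra (ket 0 1) (ket 0 1) * T (bellProj 0)).trace).re :=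
    (Complex.nonneg_iff.mp (trace_mul_nonneg (kb_psd _) hTΦ1psd)).1
  have hq2nn : 0 ≤ ((ketBra (ket 1 0) (ket 1 0) * T (bellProj 0)).trace).re :=
    (Complex.nonneg_iff.mp (trace_mul_nonneg (kb_psd _) hTΦ1psd)).1
  have hsum_re : ((bellProj 0 * T (bellProj 0)).trace).re
      + ((bellProj 1 * T (bellProj 0)).trace).re
      + ((ketBra (ket 0 1) (ket 0 1) * T (bellProj 0)).trace).re
      + ((ketBra (ket 1 0) (ket 1 0) * T (bellProj 0)).trace).re = 1 := by
    have := congrArg Complex.re hsplit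
    simpa [Complex.add_re] using this
  -- the two trace equations from heq
  have hTρ := hTlin2 (lam : ℂ) ((1 - lam : ℝ) : ℂ) (bellProj 0) (ketBra (ket 0 1) (ket 0 1))
  have hE1c : (lam:ℂ) * (bellProj 0 * T (bellProj 0)).trace
      + ((1-lam:ℝ):ℂ) * (bellProj 0 * T (ketBra (ket 0 1) (ket 0 1))).trace = (lam:ℂ) := by
    have h0 := congrArg (fun M => (bellProj 0 * M).trace) heq
    rw [hTρ, Matrix.mul_add, Matrix.mul_smul, Matrix.mul_smul, Matrix.trace_add,
      Matrix.trace_smul, Matrix.trace_smul, Matrix.mul_add, Matrix.mul_smul, Matrix.mul_smul,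
      Matrix.trace_add, Matrix.trace_smul, Matrix.trace_smul, tr_11, tr_12] at h0
    simpa [smul_eq_mul] using h0
  have hE2c : (lam:ℂ) * (bellProj 1 * T (bellProj 0)).trace
      + ((1-lam:ℝ):ℂ) * (bellProj 1 * T (ketBra (ket 0 1) (ket 0 1))).trace = ((1-lam:ℝ):ℂ) := by
    have h0 := congrArg (fun M => (bellProj 1 * M).trace) heq
    rw [hTρ, Matrix.mul_add, Matrix.mul_smul, Matrix.mul_smul, Matrix.trace_add,
      Matrix.trace_smul, Matrix.trace_smul, Matrix.mul_add, Matrix.mul_smul, Matrix.mul_smul,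
      Matrix.trace_add, Matrix.trace_smul, Matrix.trace_smul, tr_21, tr_22] at h0
    simpa [smul_eq_mul] using h0
  have hE1 : lam * ((bellProj 0 * T (bellProj 0)).trace).re
      + (1-lam) * ((bellProj 0 * T (ketBra (ket 0 1) (ket 0 1))).trace).re = lam := by
    have := congrArg Complex.re hE1c
    simpa [Complex.add_re, Complex.re_ofReal_mul, Complex.ofReal_re] using this
  have hE2 : lam * ((bellProj 1 * T (bellProj 0)).trace).re
      + (1-lam) * ((bellProj 1 * T (ketBra (ket 0 1) (ket 0 1))).trace).re = 1 - lam := by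
    have := congrArg Complex.re hE2c
    simpa [Complex.add_re, Complex.re_ofReal_mul, Complex.ofReal_re] using this
  -- the separable curve constraint
  have hl0 : (0:ℝ) < lam := by linarith
  have hdd0 : (0:ℝ) < (2*lam - 1)/(2*lam) := div_pos (by linarith) (by linarith)
  have hdd1 : (2*lam - 1)/(2*lam) < 1 := by
    rw [div_lt_one (by linarith)]; linarith
  set dd : ℝ := (2*lam - 1)/(2*lam) with hdd_def
  have hc0 : (0:ℝ) < dd/2 := by linarith
  have hc1 : dd/2 < 1 := by linarith
  set sR := Real.sqrt (dd/2) with hsR_def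
  set tR := Real.sqrt (1 - dd/2) with htR_def
  have hs2 : sR^2 = dd/2 := Real.sq_sqrt hc0.le
  have ht2 : tR^2 = 1 - dd/2 := Real.sq_sqrt (by linarith)
  have hst : sR^2 + tR^2 = 1 := by rw [hs2, ht2]; ring
  have hsepΩ := hNE _ (sep4 sR tR hst)
  have hb := sep_bell0 hsepΩ
  rw [hTlin3 ((2*sR^2*tR^2 : ℝ) : ℂ) ((tR^4 : ℝ) : ℂ) ((sR^4 : ℝ) : ℂ)] at hb
  rw [Matrix.mul_add, Matrix.mul_add, Matrix.mul_smul, Matrix.mul_smul, Matrix.mul_smul,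
    Matrix.trace_add, Matrix.trace_add, Matrix.trace_smul, Matrix.trace_smul,
    Matrix.trace_smul] at hb
  simp only [smul_eq_mul, Complex.add_re, Complex.re_ofReal_mul] at hb
  -- now pure real arithmetic
  set T1 := ((bellProj 0 * T (bellProj 0)).trace).re
  set T2 := ((bellProj 1 * T (bellProj 0)).trace).re
  set S1 := ((bellProj 0 * T (ketBra (ket 0 1) (ket 0 1))).trace).re
  set S2 := ((bellProj 1 * T (ketBra (ket 0 1) (ket 0 1))).trace).re
  set R1 := ((bellProj 0 * T (ketBra (ket 1 0) (ket 1 0))).trace).re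
  -- substitute powers in hb
  have hs4 : sR^4 = (dd/2)^2 := by rw [show sR^4 = (sR^2)^2 by ring, hs2]
  have ht4 : tR^4 = (1 - dd/2)^2 := by rw [show tR^4 = (tR^2)^2 by ring, ht2]
  rw [hs4, ht4, hs2, ht2] at hb
  have hdd_mul : dd * (2*lam) = 2*lam - 1 := by rw [hdd_def]; field_simp
  clear_value T1 T2 S1 S2 R1
  clear_value dd sR tR
  -- real arithmetic from here on
  have h1ml : (0:ℝ) < 1 - lam := by linarith
  -- from hE2, hs2le : lam * T2 ≥ (1-lam)/2
  have ht2low : (1-lam)/2 ≤ lam * T2 := by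
    nlinarith [mul_nonneg h1ml.le (show (0:ℝ) ≤ 1/2 - S2 by linarith)]
  -- t1 + t2 ≤ 1
  have ht1t2 : T1 + T2 ≤ 1 := by linarith [hsum_re, hq1nn, hq2nn]
  -- s1 ≥ 1/2
  have hs1ge : (1:ℝ)/2 ≤ S1 := by
    nlinarith [mul_nonneg hl0.le (show (0:ℝ) ≤ 1 - T1 - T2 by linarith)]
  have hs1 : S1 = 1/2 := le_antisymm hs1le hs1ge
  -- t1 value
  have ht1v : lam * T1 = lam - (1-lam)/2 := by rw [hs1] at hE1; linarith
  have hlamdd : lam * dd = (2*lam - 1)/2 := by linarith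
  have hT1v : T1 = 1/2 + dd := by
    apply mul_left_cancel₀ (ne_of_gt hl0)
    rw [mul_add]
    linarith
  rw [hs1, hT1v] at hb
  nlinarith [hb, hr1, hdd0, hdd1, mul_pos hdd0 hdd0,
    mul_nonneg (mul_nonneg hdd0.le hdd0.le) hr1,
    mul_lt_mul_of_pos_left hdd1 (mul_pos hdd0 hdd0)]
end
end

section
/- If ρ is a separable two-qubit density matrix, then tr(Φ_i ρ) ≤ 1/2 for each i ∈ {1,2,3,4}, where Φ_i are the four Bell projectors. -/
open Matrix Kronecker Polynomial
open scoped ComplexOrder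

noncomputable section

lemma key (a b c d : ℂ) (hu : Complex.normSq a + Complex.normSq b = 1)
    (hv : Complex.normSq c + Complex.normSq d = 1) :
    Complex.normSq (a * c + b * d) ≤ 1 := by
  have h1 : ‖a * c + b * d‖ ≤
      ‖a‖ * ‖c‖ + ‖b‖ * ‖d‖ := by
    calc ‖a * c + b * d‖ ≤ ‖a*c‖ + ‖b*d‖ :=
          norm_add_le _ _
      _ = _ := by simp [norm_mul]
  have ha := Complex.sq_norm a
  have hb := Complex.sq_norm b
  have hc := Complex.sq_norm c
  have hd := Complex.sq_norm d
  have he := Complex.sq_norm (a * c + b * d)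
  nlinarith [sq_nonneg (‖a‖ * ‖d‖ - ‖b‖ * ‖c‖),
    norm_nonneg (a*c+b*d), norm_nonneg a, norm_nonneg b,
    norm_nonneg c, norm_nonneg d]

lemma tr_term (ψ : Vec4) (u v : Fin 2 → ℂ) :
    (ketBra ψ ψ * (vecMulVec u (star u) ⊗ₖ vecMulVec v (star v))).trace
      = Complex.normSq (∑ q : Q2, star (ψ q) * (u q.1 * v q.2)) := by
  rw [← Complex.mul_conj]
  simp only [Matrix.trace, Matrix.mul_apply, ketBra, vecMulVec, Matrix.diag_apply,
    Matrix.kroneckerMap_apply, Fintype.sum_prod_type, Fin.sum_univ_two, map_sum, map_add,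
    _root_.map_mul, Complex.star_def, Complex.conj_conj, Matrix.of_apply, Pi.star_apply]
  ring

lemma key' (a b c d : ℂ) (hu : Complex.normSq a + Complex.normSq b = 1)
    (hv : Complex.normSq c + Complex.normSq d = 1) :
    Complex.normSq (a * c - b * d) ≤ 1 := by
  have := key a (-b) c d (by simpa using hu) hv
  simpa [neg_mul, ← sub_eq_add_neg] using this

lemma hs2 : Complex.normSq ((Real.sqrt 2 : ℂ)⁻¹) = 1/2 := by
  rw [Complex.normSq_inv, Complex.normSq_ofReal, Real.mul_self_sqrt (by norm_num)]
  norm_num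

lemma zbound (i : Fin 4) (u v : Fin 2 → ℂ) (hu : IsUnitVec u) (hv : IsUnitVec v) :
    Complex.normSq (∑ q : Q2, star (bell i q) * (u q.1 * v q.2)) ≤ 1/2 := by
  have hu' : Complex.normSq (u 0) + Complex.normSq (u 1) = 1 := by
    simpa [IsUnitVec, Fin.sum_univ_two] using hu
  have hv' : Complex.normSq (v 0) + Complex.normSq (v 1) = 1 := by
    simpa [IsUnitVec, Fin.sum_univ_two] using hv
  fin_cases i
  · show Complex.normSq (∑ q : Q2, star (bell 0 q) * (u q.1 * v q.2)) ≤ 1/2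
    have hz : (∑ q : Q2, star (bell 0 q) * (u q.1 * v q.2))
        = (Real.sqrt 2 : ℂ)⁻¹ * (u 0 * v 0 + u 1 * v 1) := by
      simp only [bell, Matrix.cons_val_zero, Pi.smul_apply, Pi.add_apply, ket, smul_eq_mul,
        Fintype.sum_prod_type, Fin.sum_univ_two]
      norm_num [Prod.ext_iff]; ring
    rw [hz, Complex.normSq_mul, hs2]
    have := key (u 0) (u 1) (v 0) (v 1) hu' hv'
    linarith
  · show Complex.normSq (∑ q : Q2, star (bell 1 q) * (u q.1 * v q.2)) ≤ 1/2
    have hz : (∑ q : Q2, star (bell 1 q) * (u q.1 * v q.2))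
        = (Real.sqrt 2 : ℂ)⁻¹ * (u 0 * v 0 - u 1 * v 1) := by
      simp only [bell, Matrix.cons_val_one, Matrix.head_cons, Pi.smul_apply, Pi.sub_apply, ket,
        smul_eq_mul, Fintype.sum_prod_type, Fin.sum_univ_two]
      norm_num [Prod.ext_iff, ket]; ring
    rw [hz, Complex.normSq_mul, hs2]
    have := key' (u 0) (u 1) (v 0) (v 1) hu' hv'
    linarith
  · show Complex.normSq (∑ q : Q2, star (bell 2 q) * (u q.1 * v q.2)) ≤ 1/2
    have hz : (∑ q : Q2, star (bell 2 q) * (u q.1 * v q.2))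
        = (Real.sqrt 2 : ℂ)⁻¹ * (u 1 * v 0 + u 0 * v 1) := by
      simp only [bell, Matrix.cons_val_two, Matrix.tail_cons, Matrix.head_cons, Pi.smul_apply,
        Pi.add_apply, ket, smul_eq_mul, Fintype.sum_prod_type, Fin.sum_univ_two]
      norm_num [Prod.ext_iff]; ring
    rw [hz, Complex.normSq_mul, hs2]
    have := key (u 1) (u 0) (v 0) (v 1) (by linarith) hv'
    linarith
  · show Complex.normSq (∑ q : Q2, star (bell 3 q) * (u q.1 * v q.2)) ≤ 1/2
    have hz : (∑ q : Q2, star (bell 3 q) * (u q.1 * v q.2))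
        = (Real.sqrt 2 : ℂ)⁻¹ * (u 1 * v 0 - u 0 * v 1) := by
      simp only [bell, Matrix.cons_val_three, Matrix.tail_cons, Matrix.head_cons, Pi.smul_apply,
        Pi.sub_apply, ket, smul_eq_mul, Fintype.sum_prod_type, Fin.sum_univ_two]
      norm_num [Prod.ext_iff]; ring
    rw [hz, Complex.normSq_mul, hs2]
    have := key' (u 1) (u 0) (v 0) (v 1) (by linarith) hv'
    linarith
theorem sep_bell_overlap_le_half (ρ : Mat4) (h : SepState ρ) :
    ∀ i : Fin 4, (bellProj i * ρ).trace ≤ 1 / 2 := by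
  obtain ⟨n, p, u, v, hp0, hp1, hu, hv, rfl⟩ := h
  intro i
  set c : Fin n → ℝ := fun j =>
    Complex.normSq (∑ q : Q2, star (bell i q) * (u j q.1 * v j q.2)) with hc
  have hle : ∀ j, c j ≤ 1/2 := fun j => zbound i (u j) (v j) (hu j) (hv j)
  have h1 : (bellProj i * ∑ j, (p j : ℂ) •
      (vecMulVec (u j) (star (u j)) ⊗ₖ vecMulVec (v j) (star (v j)))).trace
      = ((∑ j, p j * c j : ℝ) : ℂ) := by
    rw [Matrix.mul_sum, Matrix.trace_sum]
    push_cast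
    refine Finset.sum_congr rfl fun j _ => ?_
    rw [Matrix.mul_smul, Matrix.trace_smul, bellProj, tr_term (bell i) (u j) (v j)]
    simp [hc]
  rw [h1]
  have h2 : (∑ j, p j * c j) ≤ 1/2 := by
    calc ∑ j, p j * c j ≤ ∑ j, p j * (1/2) :=
          Finset.sum_le_sum fun j _ => mul_le_mul_of_nonneg_left (hle j) (hp0 j)
      _ = 1/2 := by rw [← Finset.sum_mul, hp1, one_mul]
  calc ((∑ j, p j * c j : ℝ) : ℂ) ≤ ((1/2 : ℝ) : ℂ) := by exact_mod_cast h2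
    _ = 1/2 := by norm_num
end
end
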